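/- arXiv:1705.03137 — 9 statements merged into one kernel-verified Lean document; each statement's English description precedes it below -/
import Mathlib

section
/- Condition A for the potential: for every player i and every configuration S_{-i} of all coordinates other than a_i, the potential satisfies Φ(a_i = 1, S_{-i}) − Φ(a_i = 0, S_{-i}) = u_i(a_i = 1, S_{-i}) − u_i(a_i = 0, S_{-i}); explicitly, both sides equal v_i + h Σ_{j≠i} a_j + φ Σ_{j≠i} g_{ij} g_{ji} a_j. -/
/-!
Switching `a_i` on only changes the terms that contain `a_i`. In `u_i` these are the three terms
with the factor `a_i`, which add `v_i + h Σ_{j≠i} a_j + φ Σ_{j≠i} g_{ij} g_{ji} a_j`. In `Φ`, the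
`h`- and `φ`-terms are sums over ordered pairs of a symmetric function, so the pairs `(i, j)` and
`(j, i)` each contribute the same change. This doubling cancels the factors `1/2`. The link terms
of both `u_i` and `Φ` only read off-diagonal entries, so they do not change.
-/

open Finset

noncomputable section

/-- A network state: the diagonal entry `S i i` is player `i`'s action status `a_i`,
and the off-diagonal entry `S i j` (for `i ≠ j`) is the link status `g_{ij}`. -/
abbrev NetState (n : ℕ) := Fin n → Fin n → Bool

/-- Numerical (0/1) value of a Boolean coordinate. -/
def bv (x : Bool) : ℝ := if x then 1 else 0

/-- Player `i`'s payoff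
`u_i(S) = a_i v_i + h a_i Σ_{j≠i} a_j + φ a_i Σ_{j≠i} g_{ij} g_{ji} a_j
  + Σ_{j≠i} g_{ij} w_{ij} + m Σ_{j≠i} g_{ij} g_{ji}
  + q Σ_{j,l pairwise distinct from each other and from i} g_{ij} g_{jl} g_{li}`. -/
def payoff (n : ℕ) (v : Fin n → ℝ) (w : Fin n → Fin n → ℝ) (h φ m q : ℝ)
    (S : NetState n) (i : Fin n) : ℝ :=
  bv (S i i) * v i
    + h * bv (S i i) * ∑ j ∈ univ.filter (fun j => j ≠ i), bv (S j j)
    + φ * bv (S i i) * ∑ j ∈ univ.filter (fun j => j ≠ i), bv (S i j) * bv (S j i) * bv (S j j)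
    + ∑ j ∈ univ.filter (fun j => j ≠ i), bv (S i j) * w i j
    + m * ∑ j ∈ univ.filter (fun j => j ≠ i), bv (S i j) * bv (S j i)
    + q * ∑ j ∈ univ.filter (fun j => j ≠ i),
        ∑ l ∈ univ.filter (fun l => l ≠ i ∧ l ≠ j),
          bv (S i j) * bv (S j l) * bv (S l i)

/-- The potential
`Φ(S) = Σ_i a_i v_i + (h/2) Σ_{i≠j} a_i a_j + (φ/2) Σ_{i≠j} a_i a_j g_{ij} g_{ji}
  + Σ_{i≠j} g_{ij} w_{ij} + (m/2) Σ_{i≠j} g_{ij} g_{ji}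
  + (q/3) Σ_{i,j,l pairwise distinct} g_{ij} g_{jl} g_{li}`. -/
def potential (n : ℕ) (v : Fin n → ℝ) (w : Fin n → Fin n → ℝ) (h φ m q : ℝ)
    (S : NetState n) : ℝ :=
  (∑ i, bv (S i i) * v i)
    + (h / 2) * ∑ i, ∑ j ∈ univ.filter (fun j => j ≠ i), bv (S i i) * bv (S j j)
    + (φ / 2) * ∑ i, ∑ j ∈ univ.filter (fun j => j ≠ i),
        bv (S i i) * bv (S j j) * bv (S i j) * bv (S j i)
    + (∑ i, ∑ j ∈ univ.filter (fun j => j ≠ i), bv (S i j) * w i j)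
    + (m / 2) * ∑ i, ∑ j ∈ univ.filter (fun j => j ≠ i), bv (S i j) * bv (S j i)
    + (q / 3) * ∑ i, ∑ j ∈ univ.filter (fun j => j ≠ i),
        ∑ l ∈ univ.filter (fun l => l ≠ i ∧ l ≠ j), bv (S i j) * bv (S j l) * bv (S l i)

section OffDiagonalSums

variable {ι M : Type*} [Fintype ι] [DecidableEq ι] [AddCommGroup M]

theorem sum_offDiag_sub_sum_offDiag {F G : ι → ι → M} (i : ι)
    (hF : ∀ x y, F x y = F y x) (hG : ∀ x y, G x y = G y x)
    (hGF : ∀ x y, x ≠ i → y ≠ i → G x y = F x y) :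
    ∑ x, ∑ y ∈ univ.filter (· ≠ x), G x y - ∑ x, ∑ y ∈ univ.filter (· ≠ x), F x y
      = 2 • ∑ y ∈ univ.filter (· ≠ i), (G i y - F i y) := by
  set D : ι → ι → M := fun x y => G x y - F x y
  have hD : ∀ x y, D x y = D y x := fun x y => by simp only [D, hF x y, hG x y]
  have hrow : ∀ x ∈ univ.erase i, ∑ y ∈ univ.filter (· ≠ x), D x y = D i x := by
    intro x hx
    have hxi : x ≠ i := ne_of_mem_erase hx
    rw [sum_eq_single_of_mem i (by simpa using hxi.symm)
      fun y _ hyi => sub_eq_zero.2 (hGF x y hxi hyi), hD]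
  simp only [← sum_sub_distrib]
  rw [← add_sum_erase _ _ (mem_univ i), sum_congr rfl hrow, ← filter_ne', two_nsmul]

end OffDiagonalSums

theorem bv_true : bv true = 1 := if_pos rfl

theorem bv_false : bv false = 0 := if_neg Bool.false_ne_true

section SwitchingOn

variable {n : ℕ} {i : Fin n} {S S' : NetState n}

theorem apply_eq_of_row_ne (hagree : ∀ x y : Fin n, ¬(x = i ∧ y = i) → S' x y = S x y)
    ⦃x : Fin n⦄ (hx : x ≠ i) (y : Fin n) : S' x y = S x y :=
  hagree x y fun hxy => hx hxy.1

theorem apply_eq_of_col_ne (hagree : ∀ x y : Fin n, ¬(x = i ∧ y = i) → S' x y = S x y)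
    (x : Fin n) {y : Fin n} (hy : y ≠ i) : S' x y = S x y :=
  hagree x y fun hxy => hy hxy.2

theorem apply_eq_of_ne (hagree : ∀ x y : Fin n, ¬(x = i ∧ y = i) → S' x y = S x y)
    {x y : Fin n} (hxy : x ≠ y) : S' x y = S x y :=
  hagree x y fun hxy' => hxy (hxy'.1.trans hxy'.2.symm)

def actionGain (v : Fin n → ℝ) (h φ : ℝ) (S : NetState n) (i : Fin n) : ℝ :=
  v i + h * (∑ j ∈ univ.filter (fun j => j ≠ i), bv (S j j))
    + φ * (∑ j ∈ univ.filter (fun j => j ≠ i), bv (S i j) * bv (S j i) * bv (S j j))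

theorem payoff_sub_payoff_of_switchOn (v : Fin n → ℝ) (w : Fin n → Fin n → ℝ) (h φ m q : ℝ)
    (hS : S i i = false) (hS' : S' i i = true)
    (hagree : ∀ x y : Fin n, ¬(x = i ∧ y = i) → S' x y = S x y) :
    payoff n v w h φ m q S' i - payoff n v w h φ m q S i = actionGain v h φ S i := by
  simp +contextual only [payoff, actionGain, sum_filter, hS, hS', apply_eq_of_row_ne hagree,
    apply_eq_of_col_ne hagree, ne_eq, not_false_eq_true, bv_true, bv_false]
  ring

theorem sum_action_mul_value_sub_of_switchOn (v : Fin n → ℝ)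
    (hS : S i i = false) (hS' : S' i i = true)
    (hagree : ∀ x y : Fin n, ¬(x = i ∧ y = i) → S' x y = S x y) :
    ∑ x, bv (S' x x) * v x - ∑ x, bv (S x x) * v x = v i := by
  rw [← add_sum_erase _ _ (mem_univ i), ← add_sum_erase _ _ (mem_univ i),
    sum_congr rfl fun x hx => by rw [apply_eq_of_row_ne hagree (ne_of_mem_erase hx)],
    hS, hS', bv_true, bv_false]
  ring

theorem sum_action_pair_sub_of_switchOn (hS : S i i = false) (hS' : S' i i = true)
    (hagree : ∀ x y : Fin n, ¬(x = i ∧ y = i) → S' x y = S x y) :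
    ∑ x, ∑ y ∈ univ.filter (· ≠ x), bv (S' x x) * bv (S' y y)
        - ∑ x, ∑ y ∈ univ.filter (· ≠ x), bv (S x x) * bv (S y y)
      = 2 * ∑ j ∈ univ.filter (· ≠ i), bv (S j j) := by
  have hrow := apply_eq_of_row_ne hagree
  rw [sum_offDiag_sub_sum_offDiag i (fun x y => mul_comm _ _) (fun x y => mul_comm _ _)
    fun x y hx hy => by rw [hrow hx, hrow hy], nsmul_eq_mul, Nat.cast_ofNat]
  congr 1
  refine sum_congr rfl fun j hj => ?_
  rw [hS, hS', hrow (mem_filter.1 hj).2, bv_true, bv_false]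
  ring

theorem sum_mutual_action_pair_sub_of_switchOn (hS : S i i = false) (hS' : S' i i = true)
    (hagree : ∀ x y : Fin n, ¬(x = i ∧ y = i) → S' x y = S x y) :
    ∑ x, ∑ y ∈ univ.filter (· ≠ x), bv (S' x x) * bv (S' y y) * bv (S' x y) * bv (S' y x)
        - ∑ x, ∑ y ∈ univ.filter (· ≠ x), bv (S x x) * bv (S y y) * bv (S x y) * bv (S y x)
      = 2 * ∑ j ∈ univ.filter (· ≠ i), bv (S i j) * bv (S j i) * bv (S j j) := by
  have hrow := apply_eq_of_row_ne hagree
  rw [sum_offDiag_sub_sum_offDiag i (fun x y => by ring) (fun x y => by ring)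
    fun x y hx hy => by rw [hrow hx, hrow hy, hrow hx, hrow hy], nsmul_eq_mul, Nat.cast_ofNat]
  congr 1
  refine sum_congr rfl fun j hj => ?_
  have hji : j ≠ i := (mem_filter.1 hj).2
  rw [hS, hS', hrow hji, hrow hji, apply_eq_of_col_ne hagree i hji, bv_true, bv_false]
  ring

theorem potential_sub_potential_of_switchOn (v : Fin n → ℝ) (w : Fin n → Fin n → ℝ)
    (h φ m q : ℝ) (hS : S i i = false) (hS' : S' i i = true)
    (hagree : ∀ x y : Fin n, ¬(x = i ∧ y = i) → S' x y = S x y) :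
    potential n v w h φ m q S' - potential n v w h φ m q S = actionGain v h φ S i := by
  simp only [potential, actionGain]
  rw [eq_add_of_sub_eq' (sum_action_mul_value_sub_of_switchOn v hS hS' hagree),
    eq_add_of_sub_eq' (sum_action_pair_sub_of_switchOn hS hS' hagree),
    eq_add_of_sub_eq' (sum_mutual_action_pair_sub_of_switchOn hS hS' hagree)]
  simp +contextual only [sum_filter, apply_eq_of_ne hagree,
    fun x y (hyx : y ≠ x) => apply_eq_of_ne hagree hyx.symm, ne_eq, not_false_eq_true]
  ring

end SwitchingOn

theorem condition_A_general (n : ℕ) (v : Fin n → ℝ) (w : Fin n → Fin n → ℝ)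
    (h φ m q : ℝ) (i : Fin n) (S S' : NetState n)
    (hS : S i i = false) (hS' : S' i i = true)
    (hagree : ∀ x y : Fin n, ¬(x = i ∧ y = i) → S' x y = S x y) :
    potential n v w h φ m q S' - potential n v w h φ m q S
        = payoff n v w h φ m q S' i - payoff n v w h φ m q S i
      ∧ potential n v w h φ m q S' - potential n v w h φ m q S
        = v i + h * (∑ j ∈ univ.filter (fun j => j ≠ i), bv (S j j))
            + φ * (∑ j ∈ univ.filter (fun j => j ≠ i), bv (S i j) * bv (S j i) * bv (S j j)) := by
  have hpotential := potential_sub_potential_of_switchOn v w h φ m q hS hS' hagree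
  exact ⟨hpotential.trans (payoff_sub_payoff_of_switchOn v w h φ m q hS hS' hagree).symm,
    hpotential⟩

/-- **Condition A for the potential.** For every player `i` and every configuration of all
coordinates other than `a_i`, flipping `a_i` from `0` to `1` changes the potential by exactly
the change in `i`'s payoff, and both changes equal
`v_i + h Σ_{j≠i} a_j + φ Σ_{j≠i} g_{ij} g_{ji} a_j`. -/
theorem condition_A (n : ℕ) (hn : 2 ≤ n) (v : Fin n → ℝ) (w : Fin n → Fin n → ℝ)
    (h φ m q : ℝ) (i : Fin n) (S S' : NetState n)
    (hS : S i i = false) (hS' : S' i i = true)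
    (hagree : ∀ x y : Fin n, ¬(x = i ∧ y = i) → S' x y = S x y) :
    potential n v w h φ m q S' - potential n v w h φ m q S
        = payoff n v w h φ m q S' i - payoff n v w h φ m q S i
      ∧ potential n v w h φ m q S' - potential n v w h φ m q S
        = v i + h * (∑ j ∈ univ.filter (fun j => j ≠ i), bv (S j j))
            + φ * (∑ j ∈ univ.filter (fun j => j ≠ i), bv (S i j) * bv (S j i) * bv (S j j)) :=
  condition_A_general n v w h φ m q i S S' hS hS' hagree
end
end

section
/- Condition B for the potential: for every ordered pair of distinct players i ≠ j and every configuration S_{-ij} of all coordinates other than g_{ij}, the potential satisfies Φ(g_{ij} = 1, S_{-ij}) − Φ(g_{ij} = 0, S_{-ij}) = u_i(g_{ij} = 1, S_{-ij}) − u_i(g_{ij} = 0, S_{-ij}); explicitly, both sides equal w_{ij} + m g_{ji} + φ a_i a_j g_{ji} + q Σ_{k ∉ {i,j}} g_{jk} g_{ki}. -/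
open Finset

noncomputable section

lemma sum_diff_one {α : Type*} [DecidableEq α] (s : Finset α) (f g : α → ℝ) (a : α)
    (ha : a ∈ s) (hfg : ∀ x ∈ s, x ≠ a → f x = g x) :
    ∑ x ∈ s, f x = (∑ x ∈ s, g x) + (f a - g a) := by
  rw [← Finset.add_sum_erase s f ha, ← Finset.add_sum_erase s g ha,
    Finset.sum_congr rfl (fun x hx =>
      hfg x (Finset.mem_of_mem_erase hx) (Finset.ne_of_mem_erase hx))]
  ring

lemma sum_diff_two {α : Type*} [DecidableEq α] (s : Finset α) (f g : α → ℝ) (a b : α)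
    (hab : a ≠ b) (ha : a ∈ s) (hb : b ∈ s)
    (hfg : ∀ x ∈ s, x ≠ a → x ≠ b → f x = g x) :
    ∑ x ∈ s, f x = (∑ x ∈ s, g x) + (f a - g a) + (f b - g b) := by
  have hb' : b ∈ s.erase a := Finset.mem_erase.mpr ⟨hab.symm, hb⟩
  rw [← Finset.add_sum_erase s f ha, ← Finset.add_sum_erase s g ha,
    ← Finset.add_sum_erase _ f hb', ← Finset.add_sum_erase _ g hb',
    Finset.sum_congr rfl (fun x hx =>
      hfg x (Finset.mem_of_mem_erase (Finset.mem_of_mem_erase hx))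
        (Finset.ne_of_mem_erase (Finset.mem_of_mem_erase hx))
        (Finset.ne_of_mem_erase hx))]
  ring


/-- **Condition B for the potential.** For every ordered pair of distinct players `i ≠ j` and
every configuration of all coordinates other than `g_{ij}`, flipping `g_{ij}` from `0` to `1`
changes the potential by exactly the change in `i`'s payoff, and both changes equal
`w_{ij} + m g_{ji} + φ a_i a_j g_{ji} + q Σ_{l ∉ {i,j}} g_{jl} g_{li}`. -/
theorem condition_B (n : ℕ) (hn : 2 ≤ n) (v : Fin n → ℝ) (w : Fin n → Fin n → ℝ)
    (h φ m q : ℝ) (i j : Fin n) (hij : i ≠ j) (S S' : NetState n)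
    (hS : S i j = false) (hS' : S' i j = true)
    (hagree : ∀ x y : Fin n, ¬(x = i ∧ y = j) → S' x y = S x y) :
    potential n v w h φ m q S' - potential n v w h φ m q S
        = payoff n v w h φ m q S' i - payoff n v w h φ m q S i
      ∧ potential n v w h φ m q S' - potential n v w h φ m q S
        = w i j + m * bv (S j i) + φ * bv (S i i) * bv (S j j) * bv (S j i)
            + q * ∑ l ∈ univ.filter (fun l => l ≠ i ∧ l ≠ j), bv (S j l) * bv (S l i) := by
  have hji : j ≠ i := fun e => hij e.symm
  have hBij : bv (S i j) = 0 := by simp [bv, hS]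
  have hB'ij : bv (S' i j) = 1 := by simp [bv, hS']
  have heq : ∀ x y : Fin n, ¬(x = i ∧ y = j) → bv (S' x y) = bv (S x y) := fun x y hxy => by
    rw [bv, bv, hagree x y hxy]
  have hdiag : ∀ x, bv (S' x x) = bv (S x x) := fun x =>
    heq x x (by rintro ⟨rfl, rfl⟩; exact hij rfl)
  have hfst : ∀ x y, x ≠ i → bv (S' x y) = bv (S x y) := fun x y hx =>
    heq x y (fun hh => hx hh.1)
  have hsnd : ∀ x y, y ≠ j → bv (S' x y) = bv (S x y) := fun x y hy =>
    heq x y (fun hh => hy hh.2)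
  have hSi : ∀ x, bv (S' x i) = bv (S x i) := fun x => hsnd x i hij
  set Q : ℝ := ∑ l ∈ univ.filter (fun l => l ≠ i ∧ l ≠ j), bv (S j l) * bv (S l i) with hQdef
  have hjmem_i : j ∈ univ.filter (fun y => y ≠ i) := by simp [hji]
  have himem_j : i ∈ univ.filter (fun y => y ≠ j) := by simp [hij]
  -- Term 1
  have P1 : (∑ x, bv (S' x x) * v x) = ∑ x, bv (S x x) * v x :=
    Finset.sum_congr rfl fun x _ => by rw [hdiag]
  -- Term 2
  have P2 : (∑ x, ∑ y ∈ univ.filter (fun y => y ≠ x), bv (S' x x) * bv (S' y y))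
      = ∑ x, ∑ y ∈ univ.filter (fun y => y ≠ x), bv (S x x) * bv (S y y) :=
    Finset.sum_congr rfl fun x _ => Finset.sum_congr rfl fun y _ => by rw [hdiag, hdiag]
  -- Term 3 (φ)
  have Hi3 : (∑ y ∈ univ.filter (fun y => y ≠ i),
        bv (S' i i) * bv (S' y y) * bv (S' i y) * bv (S' y i))
      = (∑ y ∈ univ.filter (fun y => y ≠ i),
          bv (S i i) * bv (S y y) * bv (S i y) * bv (S y i))
        + bv (S i i) * bv (S j j) * bv (S j i) := by
    rw [sum_diff_one _ _ (fun y => bv (S i i) * bv (S y y) * bv (S i y) * bv (S y i)) j hjmem_i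
      (fun y _ hyj => by rw [hdiag, hdiag, hsnd i y hyj, hSi y])]
    rw [hdiag, hdiag, hB'ij, hSi j, hBij]; ring
  have Hj3 : (∑ y ∈ univ.filter (fun y => y ≠ j),
        bv (S' j j) * bv (S' y y) * bv (S' j y) * bv (S' y j))
      = (∑ y ∈ univ.filter (fun y => y ≠ j),
          bv (S j j) * bv (S y y) * bv (S j y) * bv (S y j))
        + bv (S j j) * bv (S i i) * bv (S j i) := by
    rw [sum_diff_one _ _ (fun y => bv (S j j) * bv (S y y) * bv (S j y) * bv (S y j)) i himem_j
      (fun y _ hyi => by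
        have e1 : bv (S' y j) = bv (S y j) := heq y j (fun hh => hyi hh.1)
        rw [hdiag, hdiag, hfst j y hji, e1])]
    rw [hdiag, hdiag, hfst j i hji, hB'ij, hBij]; ring
  have P3 : (∑ x, ∑ y ∈ univ.filter (fun y => y ≠ x),
        bv (S' x x) * bv (S' y y) * bv (S' x y) * bv (S' y x))
      = (∑ x, ∑ y ∈ univ.filter (fun y => y ≠ x),
          bv (S x x) * bv (S y y) * bv (S x y) * bv (S y x))
        + 2 * (bv (S i i) * bv (S j j) * bv (S j i)) := by
    rw [sum_diff_two univ _
      (fun x => ∑ y ∈ univ.filter (fun y => y ≠ x),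
        bv (S x x) * bv (S y y) * bv (S x y) * bv (S y x)) i j hij (mem_univ i) (mem_univ j)
      (fun x _ hxi hxj => Finset.sum_congr rfl fun y _ => by
        rw [hdiag, hdiag, hfst x y hxi, hsnd y x hxj])]
    rw [Hi3, Hj3]; ring
  -- Term 4 (w)
  have Hi4 : (∑ y ∈ univ.filter (fun y => y ≠ i), bv (S' i y) * w i y)
      = (∑ y ∈ univ.filter (fun y => y ≠ i), bv (S i y) * w i y) + w i j := by
    rw [sum_diff_one _ _ (fun y => bv (S i y) * w i y) j hjmem_i
      (fun y _ hyj => by rw [hsnd i y hyj])]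
    rw [hB'ij, hBij]; ring
  have P4 : (∑ x, ∑ y ∈ univ.filter (fun y => y ≠ x), bv (S' x y) * w x y)
      = (∑ x, ∑ y ∈ univ.filter (fun y => y ≠ x), bv (S x y) * w x y) + w i j := by
    rw [sum_diff_one univ _
      (fun x => ∑ y ∈ univ.filter (fun y => y ≠ x), bv (S x y) * w x y) i (mem_univ i)
      (fun x _ hxi => Finset.sum_congr rfl fun y _ => by rw [hfst x y hxi])]
    rw [Hi4]; ring
  -- Term 5 (m)
  have Hi5 : (∑ y ∈ univ.filter (fun y => y ≠ i), bv (S' i y) * bv (S' y i))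
      = (∑ y ∈ univ.filter (fun y => y ≠ i), bv (S i y) * bv (S y i)) + bv (S j i) := by
    rw [sum_diff_one _ _ (fun y => bv (S i y) * bv (S y i)) j hjmem_i
      (fun y _ hyj => by rw [hsnd i y hyj, hSi y])]
    rw [hB'ij, hSi j, hBij]; ring
  have Hj5 : (∑ y ∈ univ.filter (fun y => y ≠ j), bv (S' j y) * bv (S' y j))
      = (∑ y ∈ univ.filter (fun y => y ≠ j), bv (S j y) * bv (S y j)) + bv (S j i) := by
    rw [sum_diff_one _ _ (fun y => bv (S j y) * bv (S y j)) i himem_j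
      (fun y _ hyi => by
        have e1 : bv (S' y j) = bv (S y j) := heq y j (fun hh => hyi hh.1)
        rw [hfst j y hji, e1])]
    rw [hfst j i hji, hB'ij, hBij]; ring
  have P5 : (∑ x, ∑ y ∈ univ.filter (fun y => y ≠ x), bv (S' x y) * bv (S' y x))
      = (∑ x, ∑ y ∈ univ.filter (fun y => y ≠ x), bv (S x y) * bv (S y x))
        + 2 * bv (S j i) := by
    rw [sum_diff_two univ _
      (fun x => ∑ y ∈ univ.filter (fun y => y ≠ x), bv (S x y) * bv (S y x)) i j hij
      (mem_univ i) (mem_univ j)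
      (fun x _ hxi hxj => Finset.sum_congr rfl fun y _ => by
        rw [hfst x y hxi, hsnd y x hxj])]
    rw [Hi5, Hj5]; ring
  -- Term 6 (q): the three row types
  have Hqi : (∑ y ∈ univ.filter (fun y => y ≠ i),
        ∑ l ∈ univ.filter (fun l => l ≠ i ∧ l ≠ y), bv (S' i y) * bv (S' y l) * bv (S' l i))
      = (∑ y ∈ univ.filter (fun y => y ≠ i),
          ∑ l ∈ univ.filter (fun l => l ≠ i ∧ l ≠ y), bv (S i y) * bv (S y l) * bv (S l i))
        + Q := by
    rw [sum_diff_one _ _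
      (fun y => ∑ l ∈ univ.filter (fun l => l ≠ i ∧ l ≠ y),
        bv (S i y) * bv (S y l) * bv (S l i)) j hjmem_i
      (fun y hy hyj => by
        have hyi : y ≠ i := (mem_filter.mp hy).2
        exact Finset.sum_congr rfl fun l _ => by
          rw [hsnd i y hyj, hfst y l hyi, hSi l])]
    have h1 : (∑ l ∈ univ.filter (fun l => l ≠ i ∧ l ≠ j),
        bv (S' i j) * bv (S' j l) * bv (S' l i)) = Q := by
      rw [hQdef]
      refine Finset.sum_congr rfl fun l _ => ?_
      rw [hB'ij, hfst j l hji, hSi l]; ring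
    have h2 : (∑ l ∈ univ.filter (fun l => l ≠ i ∧ l ≠ j),
        bv (S i j) * bv (S j l) * bv (S l i)) = 0 := by
      simp [hBij]
    rw [h1, h2]; ring
  have Hqj : (∑ y ∈ univ.filter (fun y => y ≠ j),
        ∑ l ∈ univ.filter (fun l => l ≠ j ∧ l ≠ y), bv (S' j y) * bv (S' y l) * bv (S' l j))
      = (∑ y ∈ univ.filter (fun y => y ≠ j),
          ∑ l ∈ univ.filter (fun l => l ≠ j ∧ l ≠ y), bv (S j y) * bv (S y l) * bv (S l j))
        + Q := by
    have Hy : ∀ y ∈ univ.filter (fun y => y ≠ j),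
        (∑ l ∈ univ.filter (fun l => l ≠ j ∧ l ≠ y),
          bv (S' j y) * bv (S' y l) * bv (S' l j))
        = (∑ l ∈ univ.filter (fun l => l ≠ j ∧ l ≠ y),
            bv (S j y) * bv (S y l) * bv (S l j))
          + (if y = i then 0 else bv (S j y) * bv (S y i)) := by
      intro y hy
      by_cases hyi : y = i
      · rw [if_pos hyi, add_zero]
        refine Finset.sum_congr rfl fun l hl => ?_
        have hl' : l ≠ j ∧ l ≠ y := (mem_filter.mp hl).2
        have e1 : bv (S' y l) = bv (S y l) := heq y l (fun hh => hl'.1 hh.2)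
        have e2 : bv (S' l j) = bv (S l j) := heq l j (fun hh => hl'.2 (hh.1.trans hyi.symm))
        rw [hfst j y hji, e1, e2]
      · rw [if_neg hyi]
        have himem : i ∈ univ.filter (fun l => l ≠ j ∧ l ≠ y) := by
          have h1 : i ≠ y := fun hh => hyi hh.symm
          simp [hij, h1]
        rw [sum_diff_one _ _
          (fun l => bv (S j y) * bv (S y l) * bv (S l j)) i himem
          (fun l _ hli => by
            have e1 : bv (S' y l) = bv (S y l) := heq y l (fun hh => hyi hh.1)
            have e2 : bv (S' l j) = bv (S l j) := heq l j (fun hh => hli hh.1)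
            rw [hfst j y hji, e1, e2])]
        rw [hfst j y hji, hSi y, hB'ij, hBij]; ring
    rw [Finset.sum_congr rfl Hy, Finset.sum_add_distrib]
    congr 1
    have hstep : (∑ y ∈ (univ.filter (fun y => y ≠ j)).filter (fun y => ¬ y = i),
            bv (S j y) * bv (S y i))
        = ∑ y ∈ univ.filter (fun y => y ≠ j),
            (if y = i then (0:ℝ) else bv (S j y) * bv (S y i)) := by
      rw [Finset.sum_filter]
      refine Finset.sum_congr rfl fun y _ => ?_
      by_cases hyi : y = i <;> simp [hyi]
    rw [← hstep, hQdef]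
    refine Finset.sum_congr ?_ fun l _ => rfl
    ext z; simp; tauto
  have Hqo : ∀ x : Fin n, x ≠ i → x ≠ j →
      (∑ y ∈ univ.filter (fun y => y ≠ x),
        ∑ l ∈ univ.filter (fun l => l ≠ x ∧ l ≠ y), bv (S' x y) * bv (S' y l) * bv (S' l x))
      = (∑ y ∈ univ.filter (fun y => y ≠ x),
          ∑ l ∈ univ.filter (fun l => l ≠ x ∧ l ≠ y), bv (S x y) * bv (S y l) * bv (S l x))
        + bv (S x i) * bv (S j x) := by
    intro x hx hx2
    have himem : i ∈ univ.filter (fun y => y ≠ x) := by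
      have h1 : i ≠ x := fun hh => hx hh.symm
      simp [h1]
    rw [sum_diff_one _ _
      (fun y => ∑ l ∈ univ.filter (fun l => l ≠ x ∧ l ≠ y),
        bv (S x y) * bv (S y l) * bv (S l x)) i himem
      (fun y _ hyi => Finset.sum_congr rfl fun l _ => by
        have e1 : bv (S' y l) = bv (S y l) := heq y l (fun hh => hyi hh.1)
        have e2 : bv (S' l x) = bv (S l x) := heq l x (fun hh => hx2 hh.2)
        rw [hfst x y hx, e1, e2])]
    have h1 : (∑ l ∈ univ.filter (fun l => l ≠ x ∧ l ≠ i),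
        bv (S' x i) * bv (S' i l) * bv (S' l x))
        = (∑ l ∈ univ.filter (fun l => l ≠ x ∧ l ≠ i),
            bv (S x i) * bv (S i l) * bv (S l x)) + bv (S x i) * bv (S j x) := by
      have hjmem' : j ∈ univ.filter (fun l => l ≠ x ∧ l ≠ i) := by
        have h2 : j ≠ x := fun hh => hx2 hh.symm
        simp [h2, hji]
      rw [sum_diff_one _ _
        (fun l => bv (S x i) * bv (S i l) * bv (S l x)) j hjmem'
        (fun l _ hlj => by
          have e2 : bv (S' l x) = bv (S l x) := heq l x (fun hh => hx2 hh.2)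
          rw [hSi x, hsnd i l hlj, e2])]
      have e2 : bv (S' j x) = bv (S j x) := heq j x (fun hh => hx2 hh.2)
      rw [hSi x, hB'ij, e2, hBij]; ring
    rw [h1]; ring
  have Hq : ∀ x : Fin n,
      (∑ y ∈ univ.filter (fun y => y ≠ x), ∑ l ∈ univ.filter (fun l => l ≠ x ∧ l ≠ y),
        bv (S' x y) * bv (S' y l) * bv (S' l x))
      = (∑ y ∈ univ.filter (fun y => y ≠ x), ∑ l ∈ univ.filter (fun l => l ≠ x ∧ l ≠ y),
          bv (S x y) * bv (S y l) * bv (S l x))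
        + (if x = i then Q else if x = j then Q else bv (S x i) * bv (S j x)) := by
    intro x
    by_cases hx : x = i
    · rw [if_pos hx, hx]; exact Hqi
    · by_cases hx2 : x = j
      · rw [if_neg hx, if_pos hx2, hx2]; exact Hqj
      · rw [if_neg hx, if_neg hx2]; exact Hqo x hx hx2
  have P6 : (∑ x, ∑ y ∈ univ.filter (fun y => y ≠ x),
        ∑ l ∈ univ.filter (fun l => l ≠ x ∧ l ≠ y), bv (S' x y) * bv (S' y l) * bv (S' l x))
      = (∑ x, ∑ y ∈ univ.filter (fun y => y ≠ x),
          ∑ l ∈ univ.filter (fun l => l ≠ x ∧ l ≠ y), bv (S x y) * bv (S y l) * bv (S l x))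
        + 3 * Q := by
    rw [Finset.sum_congr rfl (fun x _ => Hq x), Finset.sum_add_distrib]
    congr 1
    have hjmem' : j ∈ univ.erase i := Finset.mem_erase.mpr ⟨hji, mem_univ j⟩
    rw [← Finset.add_sum_erase univ _ (mem_univ i), ← Finset.add_sum_erase _ _ hjmem']
    have hci : (if i = i then Q else if i = j then Q else bv (S i i) * bv (S j i)) = Q := by
      simp
    have hcj : (if j = i then Q else if j = j then Q else bv (S j i) * bv (S j j)) = Q := by
      simp [hji]
    have hset : (univ.erase i).erase j = univ.filter (fun l => l ≠ i ∧ l ≠ j) := by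
      ext z; simp; tauto
    have hcr : (∑ x ∈ (univ.erase i).erase j,
        (if x = i then Q else if x = j then Q else bv (S x i) * bv (S j x))) = Q := by
      rw [hQdef]
      refine Finset.sum_congr hset fun x hx => ?_
      rw [mem_filter] at hx
      rw [if_neg hx.2.1, if_neg hx.2.2, mul_comm]
    rw [hci, hcj, hcr]; ring
  -- payoff pieces
  have U2 : (∑ y ∈ univ.filter (fun y => y ≠ i), bv (S' y y))
      = ∑ y ∈ univ.filter (fun y => y ≠ i), bv (S y y) :=
    Finset.sum_congr rfl fun y _ => hdiag y
  have U3 : (∑ y ∈ univ.filter (fun y => y ≠ i), bv (S' i y) * bv (S' y i) * bv (S' y y))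
      = (∑ y ∈ univ.filter (fun y => y ≠ i), bv (S i y) * bv (S y i) * bv (S y y))
        + bv (S j i) * bv (S j j) := by
    rw [sum_diff_one _ _ (fun y => bv (S i y) * bv (S y i) * bv (S y y)) j hjmem_i
      (fun y _ hyj => by rw [hsnd i y hyj, hSi y, hdiag y])]
    rw [hB'ij, hSi j, hdiag j, hBij]; ring
  have hpot : potential n v w h φ m q S' - potential n v w h φ m q S
      = w i j + m * bv (S j i) + φ * bv (S i i) * bv (S j j) * bv (S j i) + q * Q := by
    simp only [potential]
    rw [P1, P2, P3, P4, P5, P6]; ring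
  have hpay : payoff n v w h φ m q S' i - payoff n v w h φ m q S i
      = w i j + m * bv (S j i) + φ * bv (S i i) * bv (S j j) * bv (S j i) + q * Q := by
    simp only [payoff]
    rw [hdiag i, U2, U3, Hi4, Hi5, Hqi]; ring
  exact ⟨hpot.trans hpay.symm, hpot⟩
end
end

section
/- Existence of equilibria: for every 1 < k ≤ n there exists at least one k-player Nash stable state; in particular, any state that maximizes the potential Φ over the finite state space 𝒮_n (such a maximizer exists) is k-player Nash stable for every such k. -/
open Finset

noncomputable section

/-- `S'` differs from `S` only in the coordinates `(a_i, {g_{ij} : j ∈ B, j ≠ i})`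
controlled by player `i` within the set `B` (recall `a_i` is the coordinate `(i,i)`). -/
def deviatesOnly (n : ℕ) (i : Fin n) (B : Finset (Fin n)) (S S' : NetState n) : Prop :=
  ∀ x y : Fin n, ¬(x = i ∧ y ∈ B) → S' x y = S x y

/-- `S` is `k`-player Nash stable: for every subset `Ik` of `k` players and every `i ∈ Ik`,
no deviation of `i` in the coordinates `(a_i, {g_{ij} : j ∈ Ik, j ≠ i})` improves `i`'s payoff. -/
def kPS (n : ℕ) (v : Fin n → ℝ) (w : Fin n → Fin n → ℝ) (h φ m q : ℝ) (k : ℕ)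
    (S : NetState n) : Prop :=
  ∀ Ik : Finset (Fin n), Ik.card = k → ∀ i ∈ Ik,
    ∀ S' : NetState n, deviatesOnly n i Ik S S' →
      payoff n v w h φ m q S' i ≤ payoff n v w h φ m q S i

section Helpers
variable {n : ℕ}

lemma sum_split_univ (i : Fin n) (F : Fin n → ℝ) :
    ∑ x, F x = F i + ∑ x ∈ univ.filter (fun j => j ≠ i), F x := by
  rw [filter_ne']; exact (Finset.add_sum_erase _ F (mem_univ i)).symm

lemma sum_split_pair (i x : Fin n) (hx : x ≠ i) (F : Fin n → ℝ) :
    ∑ y ∈ univ.filter (fun j => j ≠ x), F y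
      = F i + ∑ y ∈ univ.filter (fun j => j ≠ x ∧ j ≠ i), F y := by
  have h1 : univ.filter (fun j => j ≠ x ∧ j ≠ i)
      = (univ.filter (fun j => j ≠ x)).erase i := by
    ext j; simp [and_comm]
  rw [h1]
  exact (Finset.add_sum_erase _ F (by simp [hx.symm])).symm

lemma sum_split_triple (i x y : Fin n) (hx : x ≠ i) (hy : y ≠ i) (F : Fin n → ℝ) :
    ∑ l ∈ univ.filter (fun l => l ≠ x ∧ l ≠ y), F l
      = F i + ∑ l ∈ univ.filter (fun l => (l ≠ x ∧ l ≠ y) ∧ l ≠ i), F l := by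
  have h1 : univ.filter (fun l => (l ≠ x ∧ l ≠ y) ∧ l ≠ i)
      = (univ.filter (fun l => l ≠ x ∧ l ≠ y)).erase i := by
    ext j; simp [and_comm]
  rw [h1]
  exact (Finset.add_sum_erase _ F (by simp [hx.symm, hy.symm])).symm

lemma sym_split (i : Fin n) (F : Fin n → Fin n → ℝ) (hF : ∀ x y, F x y = F y x) :
    ∑ x, ∑ y ∈ univ.filter (fun j => j ≠ x), F x y
      = 2 * (∑ j ∈ univ.filter (fun j => j ≠ i), F i j)
        + ∑ x ∈ univ.filter (fun j => j ≠ i),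
            ∑ y ∈ univ.filter (fun j => j ≠ x ∧ j ≠ i), F x y := by
  rw [sum_split_univ i]
  have h2 : ∑ x ∈ univ.filter (fun j => j ≠ i), ∑ y ∈ univ.filter (fun j => j ≠ x), F x y
      = ∑ x ∈ univ.filter (fun j => j ≠ i),
          (F x i + ∑ y ∈ univ.filter (fun j => j ≠ x ∧ j ≠ i), F x y) :=
    Finset.sum_congr rfl fun x hx => sum_split_pair i x (mem_filter.mp hx).2 _
  rw [h2, Finset.sum_add_distrib]
  have h3 : ∑ x ∈ univ.filter (fun j => j ≠ i), F x i
      = ∑ x ∈ univ.filter (fun j => j ≠ i), F i x :=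
    Finset.sum_congr rfl fun x _ => hF x i
  rw [h3]; ring

lemma cyc_split (i : Fin n) (F : Fin n → Fin n → Fin n → ℝ)
    (hF : ∀ x y l, F x y l = F y l x) :
    ∑ x, ∑ y ∈ univ.filter (fun j => j ≠ x),
        ∑ l ∈ univ.filter (fun l => l ≠ x ∧ l ≠ y), F x y l
      = 3 * (∑ j ∈ univ.filter (fun j => j ≠ i),
              ∑ l ∈ univ.filter (fun l => l ≠ i ∧ l ≠ j), F i j l)
        + ∑ x ∈ univ.filter (fun j => j ≠ i),
            ∑ y ∈ univ.filter (fun j => j ≠ x ∧ j ≠ i),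
              ∑ l ∈ univ.filter (fun l => (l ≠ x ∧ l ≠ y) ∧ l ≠ i), F x y l := by
  rw [sum_split_univ i]
  have h2 : ∑ x ∈ univ.filter (fun j => j ≠ i),
        ∑ y ∈ univ.filter (fun j => j ≠ x),
          ∑ l ∈ univ.filter (fun l => l ≠ x ∧ l ≠ y), F x y l
      = ∑ x ∈ univ.filter (fun j => j ≠ i),
          ((∑ l ∈ univ.filter (fun l => l ≠ x ∧ l ≠ i), F x i l)
            + ∑ y ∈ univ.filter (fun j => j ≠ x ∧ j ≠ i),
                ∑ l ∈ univ.filter (fun l => l ≠ x ∧ l ≠ y), F x y l) :=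
    Finset.sum_congr rfl fun x hx =>
      sum_split_pair i x (mem_filter.mp hx).2
        (fun y => ∑ l ∈ univ.filter (fun l => l ≠ x ∧ l ≠ y), F x y l)
  rw [h2, Finset.sum_add_distrib]
  have h4 : ∑ x ∈ univ.filter (fun j => j ≠ i),
        ∑ y ∈ univ.filter (fun j => j ≠ x ∧ j ≠ i),
          ∑ l ∈ univ.filter (fun l => l ≠ x ∧ l ≠ y), F x y l
      = ∑ x ∈ univ.filter (fun j => j ≠ i),
          ∑ y ∈ univ.filter (fun j => j ≠ x ∧ j ≠ i),
            (F x y i + ∑ l ∈ univ.filter (fun l => (l ≠ x ∧ l ≠ y) ∧ l ≠ i), F x y l) :=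
    Finset.sum_congr rfl fun x hx => Finset.sum_congr rfl fun y hy =>
      sum_split_triple i x y (mem_filter.mp hx).2 (mem_filter.mp hy).2.2 _
  rw [h4]
  have h5 : ∑ x ∈ univ.filter (fun j => j ≠ i),
        ∑ y ∈ univ.filter (fun j => j ≠ x ∧ j ≠ i),
          (F x y i + ∑ l ∈ univ.filter (fun l => (l ≠ x ∧ l ≠ y) ∧ l ≠ i), F x y l)
      = (∑ x ∈ univ.filter (fun j => j ≠ i),
          ∑ y ∈ univ.filter (fun j => j ≠ x ∧ j ≠ i), F x y i)
        + ∑ x ∈ univ.filter (fun j => j ≠ i),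
            ∑ y ∈ univ.filter (fun j => j ≠ x ∧ j ≠ i),
              ∑ l ∈ univ.filter (fun l => (l ≠ x ∧ l ≠ y) ∧ l ≠ i), F x y l := by
    rw [← Finset.sum_add_distrib]
    exact Finset.sum_congr rfl fun x _ => Finset.sum_add_distrib
  rw [h5]
  -- S2 = Q
  have hS2 : ∑ x ∈ univ.filter (fun j => j ≠ i),
        ∑ y ∈ univ.filter (fun j => j ≠ x ∧ j ≠ i), F x y i
      = ∑ j ∈ univ.filter (fun j => j ≠ i),
          ∑ l ∈ univ.filter (fun l => l ≠ i ∧ l ≠ j), F i j l := by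
    refine Finset.sum_congr rfl fun x _ => ?_
    have hset : univ.filter (fun j => j ≠ x ∧ j ≠ i)
        = univ.filter (fun l => l ≠ i ∧ l ≠ x) := by ext j; simp [and_comm]
    rw [hset]
    exact Finset.sum_congr rfl fun y _ => by rw [hF x y i, hF y i x]
  -- S1 = Q
  have hS1 : ∑ x ∈ univ.filter (fun j => j ≠ i),
        ∑ l ∈ univ.filter (fun l => l ≠ x ∧ l ≠ i), F x i l
      = ∑ j ∈ univ.filter (fun j => j ≠ i),
          ∑ l ∈ univ.filter (fun l => l ≠ i ∧ l ≠ j), F i j l := by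
    have e1 : ∑ x ∈ univ.filter (fun j => j ≠ i),
          ∑ l ∈ univ.filter (fun l => l ≠ x ∧ l ≠ i), F x i l
        = ∑ x ∈ univ.filter (fun j => j ≠ i),
            ∑ l ∈ univ.filter (fun l => l ≠ x ∧ l ≠ i), F i l x :=
      Finset.sum_congr rfl fun x _ => Finset.sum_congr rfl fun l _ => hF x i l
    rw [e1]
    exact Finset.sum_comm'
      (s := univ.filter (fun j => j ≠ i))
      (t := fun x => univ.filter (fun l => l ≠ x ∧ l ≠ i))
      (t' := univ.filter (fun j => j ≠ i))
      (s' := fun y => univ.filter (fun l => l ≠ i ∧ l ≠ y))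
      (f := fun x y => F i y x)
      (by intro x y; simp only [mem_filter, mem_univ, true_and]; tauto)
  rw [hS1, hS2]; ring
end Helpers

section Main
variable {n : ℕ}

/-- The part of the potential not involving row `i` of the state. -/
def restFn (n : ℕ) (v : Fin n → ℝ) (w : Fin n → Fin n → ℝ) (h φ m q : ℝ)
    (i : Fin n) (S : NetState n) : ℝ :=
  (∑ x ∈ univ.filter (fun j => j ≠ i), bv (S x x) * v x)
    + (h / 2) * ∑ x ∈ univ.filter (fun j => j ≠ i),
        ∑ y ∈ univ.filter (fun j => j ≠ x ∧ j ≠ i), bv (S x x) * bv (S y y)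
    + (φ / 2) * ∑ x ∈ univ.filter (fun j => j ≠ i),
        ∑ y ∈ univ.filter (fun j => j ≠ x ∧ j ≠ i),
          bv (S x x) * bv (S y y) * bv (S x y) * bv (S y x)
    + (∑ x ∈ univ.filter (fun j => j ≠ i),
        ∑ y ∈ univ.filter (fun j => j ≠ x), bv (S x y) * w x y)
    + (m / 2) * ∑ x ∈ univ.filter (fun j => j ≠ i),
        ∑ y ∈ univ.filter (fun j => j ≠ x ∧ j ≠ i), bv (S x y) * bv (S y x)
    + (q / 3) * ∑ x ∈ univ.filter (fun j => j ≠ i),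
        ∑ y ∈ univ.filter (fun j => j ≠ x ∧ j ≠ i),
          ∑ l ∈ univ.filter (fun l => (l ≠ x ∧ l ≠ y) ∧ l ≠ i),
            bv (S x y) * bv (S y l) * bv (S l x)

lemma potential_decomp (v : Fin n → ℝ) (w : Fin n → Fin n → ℝ) (h φ m q : ℝ)
    (i : Fin n) (S : NetState n) :
    potential n v w h φ m q S = payoff n v w h φ m q S i + restFn n v w h φ m q i S := by
  unfold potential payoff restFn
  rw [sum_split_univ i (fun x => bv (S x x) * v x),
      sym_split i (fun x y => bv (S x x) * bv (S y y)) (fun x y => by ring),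
      sym_split i (fun x y => bv (S x x) * bv (S y y) * bv (S x y) * bv (S y x))
        (fun x y => by ring),
      sum_split_univ i (fun x => ∑ y ∈ univ.filter (fun j => j ≠ x), bv (S x y) * w x y),
      sym_split i (fun x y => bv (S x y) * bv (S y x)) (fun x y => by ring),
      cyc_split i (fun x y l => bv (S x y) * bv (S y l) * bv (S l x))
        (fun x y l => by ring)]
  have e2 : ∑ j ∈ univ.filter (fun j => j ≠ i), bv (S i i) * bv (S j j)
      = bv (S i i) * ∑ j ∈ univ.filter (fun j => j ≠ i), bv (S j j) :=
    (Finset.mul_sum _ _ _).symm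
  have e3 : ∑ j ∈ univ.filter (fun j => j ≠ i),
        bv (S i i) * bv (S j j) * bv (S i j) * bv (S j i)
      = bv (S i i) * ∑ j ∈ univ.filter (fun j => j ≠ i),
          bv (S i j) * bv (S j i) * bv (S j j) := by
    rw [Finset.mul_sum]
    exact Finset.sum_congr rfl fun j _ => by ring
  rw [e2, e3]; ring

lemma potential_sub (v : Fin n → ℝ) (w : Fin n → Fin n → ℝ) (h φ m q : ℝ)
    (i : Fin n) (S S' : NetState n) (hag : ∀ x y : Fin n, x ≠ i → S' x y = S x y) :
    potential n v w h φ m q S' - potential n v w h φ m q S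
      = payoff n v w h φ m q S' i - payoff n v w h φ m q S i := by
  have hr : restFn n v w h φ m q i S' = restFn n v w h φ m q i S := by
    unfold restFn
    have hm : ∀ x : Fin n, x ∈ univ.filter (fun j => j ≠ i) → x ≠ i :=
      fun x hx => (mem_filter.mp hx).2
    congr 1
    · congr 1
      · congr 1
        · congr 1
          · congr 1
            · exact Finset.sum_congr rfl fun x hx => by rw [hag x x (hm x hx)]
            · congr 1
              exact Finset.sum_congr rfl fun x hx => Finset.sum_congr rfl fun y hy => by
                rw [hag x x (hm x hx), hag y y (mem_filter.mp hy).2.2]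
          · congr 1
            exact Finset.sum_congr rfl fun x hx => Finset.sum_congr rfl fun y hy => by
              rw [hag x x (hm x hx), hag y y (mem_filter.mp hy).2.2,
                  hag x y (hm x hx), hag y x (mem_filter.mp hy).2.2]
        · exact Finset.sum_congr rfl fun x hx => Finset.sum_congr rfl fun y _ => by
            rw [hag x y (hm x hx)]
      · congr 1
        exact Finset.sum_congr rfl fun x hx => Finset.sum_congr rfl fun y hy => by
          rw [hag x y (hm x hx), hag y x (mem_filter.mp hy).2.2]
    · congr 1
      exact Finset.sum_congr rfl fun x hx => Finset.sum_congr rfl fun y hy =>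
        Finset.sum_congr rfl fun l hl => by
          rw [hag x y (hm x hx), hag y l (mem_filter.mp hy).2.2,
              hag l x (mem_filter.mp hl).2.2]
  have d1 := potential_decomp v w h φ m q i S
  have d2 := potential_decomp v w h φ m q i S'
  rw [d1, d2, hr]; ring

end Main

/-- **Existence of equilibria.** A maximizer of the potential `Φ` over the finite state space
exists; any such maximizer is `k`-player Nash stable for every `1 < k ≤ n`; in particular for
every `1 < k ≤ n` there exists at least one `k`-player Nash stable state. -/
theorem kPS_exists (n : ℕ) (hn : 2 ≤ n)
    (v : Fin n → ℝ) (w : Fin n → Fin n → ℝ) (h φ m q : ℝ) :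
    (∃ Smax : NetState n, ∀ S : NetState n,
        potential n v w h φ m q S ≤ potential n v w h φ m q Smax)
      ∧ (∀ Smax : NetState n,
          (∀ S : NetState n, potential n v w h φ m q S ≤ potential n v w h φ m q Smax) →
          ∀ k : ℕ, 1 < k → k ≤ n → kPS n v w h φ m q k Smax)
      ∧ (∀ k : ℕ, 1 < k → k ≤ n → ∃ S : NetState n, kPS n v w h φ m q k S) := by
  obtain ⟨Smax, hmax⟩ := Finite.exists_max (potential n v w h φ m q)
  have main : ∀ T : NetState n,
      (∀ S : NetState n, potential n v w h φ m q S ≤ potential n v w h φ m q T) →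
      ∀ k : ℕ, 1 < k → k ≤ n → kPS n v w h φ m q k T := by
    intro T hT k _ _ Ik _ i _ S' hdev
    have hag : ∀ x y : Fin n, x ≠ i → S' x y = T x y :=
      fun x y hx => hdev x y (fun hc => hx hc.1)
    have hsub := potential_sub v w h φ m q i T S' hag
    have h2 := hT S'
    linarith
  exact ⟨⟨Smax, hmax⟩, main, fun k hk hkn => ⟨Smax, main Smax hmax k hk hkn⟩⟩
end
end

section
/- Characterization of k-player Nash stability via the potential: a state S is k-player Nash stable if and only if for every player i, every subset I_r ⊆ I with i ∈ I_r and |I_r| ≤ k, and every state S' that differs from S only in the coordinates (a_i, {g_{ij} : j ∈ I_r, j ≠ i}), one has Φ(S) ≥ Φ(S'). -/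
open Finset

noncomputable section

variable {n : ℕ}

lemma sum1 (i : Fin n) {F F' : Fin n → ℝ} (hF : ∀ x, x ≠ i → F' x = F x) :
    (∑ x, F' x) - ∑ x, F x = F' i - F i := by
  rw [← Finset.sum_sub_distrib]
  exact Finset.sum_eq_single_of_mem i (mem_univ i)
    (fun x _ hx => by rw [hF x hx, sub_self])

lemma sum2 (i : Fin n) {G G' : Fin n → Fin n → ℝ}
    (h0 : ∀ x y, x ≠ i → y ≠ i → G' x y = G x y)
    (hsym : ∀ x y, G' x y - G x y = G' y x - G y x) :
    (∑ x, ∑ y ∈ univ.filter (fun y => y ≠ x), G' x y)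
      - (∑ x, ∑ y ∈ univ.filter (fun y => y ≠ x), G x y)
    = 2 * ∑ j ∈ univ.filter (fun j => j ≠ i), (G' i j - G i j) := by
  rw [← Finset.sum_sub_distrib]
  simp_rw [← Finset.sum_sub_distrib]
  rw [← Finset.add_sum_erase univ _ (mem_univ i)]
  have key : ∀ x ∈ univ.erase i,
      (∑ y ∈ univ.filter (fun y => y ≠ x), (G' x y - G x y)) = G' i x - G i x := by
    intro x hx
    have hxi : x ≠ i := (Finset.mem_erase.1 hx).1
    rw [Finset.sum_eq_single_of_mem i (by simp [Ne.symm hxi])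
      (fun y hy hyi => by
        have hyx : y ≠ x := by simpa using hy
        rw [h0 x y hxi hyi, sub_self])]
    exact (hsym x i).trans rfl
  rw [Finset.sum_congr rfl key, Finset.filter_ne', two_mul]

lemma sum3 (i : Fin n) {T T' : Fin n → Fin n → Fin n → ℝ}
    (h0 : ∀ x y l, x ≠ i → y ≠ i → l ≠ i → T' x y l = T x y l)
    (hcyc : ∀ x y l, T' x y l - T x y l = T' y l x - T y l x) :
    (∑ x, ∑ y ∈ univ.filter (fun y => y ≠ x),
        ∑ l ∈ univ.filter (fun l => l ≠ x ∧ l ≠ y), T' x y l)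
      - (∑ x, ∑ y ∈ univ.filter (fun y => y ≠ x),
        ∑ l ∈ univ.filter (fun l => l ≠ x ∧ l ≠ y), T x y l)
    = 3 * ∑ j ∈ univ.filter (fun j => j ≠ i),
        ∑ l ∈ univ.filter (fun l => l ≠ i ∧ l ≠ j), (T' i j l - T i j l) := by
  set D := fun x y l => T' x y l - T x y l with hD
  have hD0 : ∀ x y l, x ≠ i → y ≠ i → l ≠ i → D x y l = 0 := by
    intro x y l hx hy hl; simp [hD, h0 x y l hx hy hl]
  rw [← Finset.sum_sub_distrib]
  simp_rw [← Finset.sum_sub_distrib]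
  rw [← Finset.add_sum_erase univ _ (mem_univ i)]
  have key : ∀ x ∈ univ.erase i,
      (∑ y ∈ univ.filter (fun y => y ≠ x),
        ∑ l ∈ univ.filter (fun l => l ≠ x ∧ l ≠ y), D x y l)
      = (∑ l ∈ univ.filter (fun l => l ≠ x ∧ l ≠ i), D i l x)
        + ∑ y ∈ univ.filter (fun y => y ≠ x ∧ y ≠ i), D i x y := by
    intro x hx
    have hxi : x ≠ i := (Finset.mem_erase.1 hx).1
    have hix : i ∈ univ.filter (fun y => y ≠ x) := by simp [Ne.symm hxi]
    rw [← Finset.add_sum_erase _ _ hix]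
    congr 1
    · apply Finset.sum_congr
      · ext l; simp [and_comm]
      · intro l hl
        have : D x i l = D i l x := hcyc x i l
        rw [this]
    · rw [show (univ.filter (fun y => y ≠ x)).erase i
            = univ.filter (fun y => y ≠ x ∧ y ≠ i) by ext y; simp [and_comm]]
      apply Finset.sum_congr rfl
      intro y hy
      obtain ⟨hyx, hyi⟩ := by simpa using hy
      rw [Finset.sum_eq_single_of_mem i (by simp [Ne.symm hxi, Ne.symm hyi])
        (fun l hl hli => by
          obtain ⟨hlx, hly⟩ := by simpa using hl
          exact hD0 x y l hxi hyi hli)]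
      calc D x y i = D y i x := hcyc x y i
        _ = D i x y := hcyc y i x
  rw [Finset.sum_congr rfl key, Finset.sum_add_distrib]
  have swap : (∑ x ∈ univ.erase i, ∑ l ∈ univ.filter (fun l => l ≠ x ∧ l ≠ i), D i l x)
      = ∑ j ∈ univ.filter (fun j => j ≠ i),
          ∑ l ∈ univ.filter (fun l => l ≠ i ∧ l ≠ j), D i j l := by
    rw [Finset.sum_comm' (s' := fun y => univ.filter (fun x => x ≠ y ∧ x ≠ i))
      (t' := univ.filter (fun y => y ≠ i))
      (by intro x y; constructor <;> simp <;> tauto)]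
    apply Finset.sum_congr rfl
    intro j hj
    apply Finset.sum_congr
    · ext l; simp [and_comm]
    · intros; rfl
  rw [swap]
  have third : (∑ x ∈ univ.erase i, ∑ y ∈ univ.filter (fun y => y ≠ x ∧ y ≠ i), D i x y)
      = ∑ j ∈ univ.filter (fun j => j ≠ i),
          ∑ l ∈ univ.filter (fun l => l ≠ i ∧ l ≠ j), D i j l := by
    rw [Finset.filter_ne']
    apply Finset.sum_congr rfl
    intro j hj
    apply Finset.sum_congr
    · ext l; simp [and_comm]
    · intros; rfl
  rw [third]
  ring

lemma pot_diff (v : Fin n → ℝ) (w : Fin n → Fin n → ℝ) (h φ m q : ℝ)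
    (S S' : NetState n) (i : Fin n) (hr : ∀ x y, x ≠ i → S' x y = S x y) :
    potential n v w h φ m q S' - potential n v w h φ m q S
      = payoff n v w h φ m q S' i - payoff n v w h φ m q S i := by
  have hmem : ∀ j : Fin n, j ∈ univ.filter (fun j => j ≠ i) → j ≠ i := by
    intro j hj; simpa using hj
  -- term 1
  have d1 : (∑ x, bv (S' x x) * v x) - ∑ x, bv (S x x) * v x
      = bv (S' i i) * v i - bv (S i i) * v i :=
    sum1 i (fun x hx => by rw [hr x x hx])
  -- term 2
  have d2 : (∑ x, ∑ y ∈ univ.filter (fun y => y ≠ x), bv (S' x x) * bv (S' y y))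
      - (∑ x, ∑ y ∈ univ.filter (fun y => y ≠ x), bv (S x x) * bv (S y y))
      = 2 * (bv (S' i i) * (∑ j ∈ univ.filter (fun j => j ≠ i), bv (S j j))
          - bv (S i i) * ∑ j ∈ univ.filter (fun j => j ≠ i), bv (S j j)) := by
    rw [sum2 i (fun x y hx hy => by rw [hr x x hx, hr y y hy]) (fun x y => by ring)]
    rw [Finset.sum_congr rfl (fun j hj => show
        bv (S' i i) * bv (S' j j) - bv (S i i) * bv (S j j)
        = bv (S' i i) * bv (S j j) - bv (S i i) * bv (S j j) by rw [hr j j (hmem j hj)])]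
    rw [Finset.sum_sub_distrib, ← Finset.mul_sum, ← Finset.mul_sum]
  -- term 3
  have d3 : (∑ x, ∑ y ∈ univ.filter (fun y => y ≠ x),
        bv (S' x x) * bv (S' y y) * bv (S' x y) * bv (S' y x))
      - (∑ x, ∑ y ∈ univ.filter (fun y => y ≠ x),
        bv (S x x) * bv (S y y) * bv (S x y) * bv (S y x))
      = 2 * (bv (S' i i) * (∑ j ∈ univ.filter (fun j => j ≠ i),
            bv (S' i j) * bv (S j i) * bv (S j j))
          - bv (S i i) * ∑ j ∈ univ.filter (fun j => j ≠ i),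
            bv (S i j) * bv (S j i) * bv (S j j)) := by
    rw [sum2 i (fun x y hx hy => by rw [hr x x hx, hr y y hy, hr x y hx, hr y x hy])
      (fun x y => by ring)]
    rw [Finset.sum_congr rfl (fun j hj => show
        bv (S' i i) * bv (S' j j) * bv (S' i j) * bv (S' j i)
          - bv (S i i) * bv (S j j) * bv (S i j) * bv (S j i)
        = bv (S' i i) * (bv (S' i j) * bv (S j i) * bv (S j j))
          - bv (S i i) * (bv (S i j) * bv (S j i) * bv (S j j)) by
      rw [hr j j (hmem j hj), hr j i (hmem j hj)]; ring)]
    rw [Finset.sum_sub_distrib, ← Finset.mul_sum, ← Finset.mul_sum]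
  -- term 4
  have d4 : (∑ x, ∑ j ∈ univ.filter (fun j => j ≠ x), bv (S' x j) * w x j)
      - (∑ x, ∑ j ∈ univ.filter (fun j => j ≠ x), bv (S x j) * w x j)
      = (∑ j ∈ univ.filter (fun j => j ≠ i), bv (S' i j) * w i j)
        - ∑ j ∈ univ.filter (fun j => j ≠ i), bv (S i j) * w i j :=
    sum1 i (fun x hx => Finset.sum_congr rfl (fun j _ => by rw [hr x j hx]))
  -- term 5
  have d5 : (∑ x, ∑ y ∈ univ.filter (fun y => y ≠ x), bv (S' x y) * bv (S' y x))
      - (∑ x, ∑ y ∈ univ.filter (fun y => y ≠ x), bv (S x y) * bv (S y x))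
      = 2 * ((∑ j ∈ univ.filter (fun j => j ≠ i), bv (S' i j) * bv (S j i))
          - ∑ j ∈ univ.filter (fun j => j ≠ i), bv (S i j) * bv (S j i)) := by
    rw [sum2 i (fun x y hx hy => by rw [hr x y hx, hr y x hy]) (fun x y => by ring)]
    rw [Finset.sum_congr rfl (fun j hj => show
        bv (S' i j) * bv (S' j i) - bv (S i j) * bv (S j i)
        = bv (S' i j) * bv (S j i) - bv (S i j) * bv (S j i) by rw [hr j i (hmem j hj)])]
    rw [Finset.sum_sub_distrib]
  -- term 6
  have d6 : (∑ x, ∑ y ∈ univ.filter (fun y => y ≠ x),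
        ∑ l ∈ univ.filter (fun l => l ≠ x ∧ l ≠ y), bv (S' x y) * bv (S' y l) * bv (S' l x))
      - (∑ x, ∑ y ∈ univ.filter (fun y => y ≠ x),
        ∑ l ∈ univ.filter (fun l => l ≠ x ∧ l ≠ y), bv (S x y) * bv (S y l) * bv (S l x))
      = 3 * ((∑ j ∈ univ.filter (fun j => j ≠ i),
            ∑ l ∈ univ.filter (fun l => l ≠ i ∧ l ≠ j),
              bv (S' i j) * bv (S j l) * bv (S l i))
          - ∑ j ∈ univ.filter (fun j => j ≠ i),
            ∑ l ∈ univ.filter (fun l => l ≠ i ∧ l ≠ j),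
              bv (S i j) * bv (S j l) * bv (S l i)) := by
    rw [sum3 i (fun x y l hx hy hl => by rw [hr x y hx, hr y l hy, hr l x hl])
      (fun x y l => by ring)]
    rw [Finset.sum_congr rfl (fun j hj => Finset.sum_congr rfl (fun l hl => by
      have hji : j ≠ i := hmem j hj
      have hli : l ≠ i := by simp at hl; exact hl.1
      show bv (S' i j) * bv (S' j l) * bv (S' l i) - bv (S i j) * bv (S j l) * bv (S l i)
        = bv (S' i j) * bv (S j l) * bv (S l i) - bv (S i j) * bv (S j l) * bv (S l i)
      rw [hr j l hji, hr l i hli]))]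
    simp only [Finset.sum_sub_distrib]
  -- payoff rewrites
  have p2 : (∑ j ∈ univ.filter (fun j => j ≠ i), bv (S' j j))
      = ∑ j ∈ univ.filter (fun j => j ≠ i), bv (S j j) :=
    Finset.sum_congr rfl (fun j hj => by rw [hr j j (hmem j hj)])
  have p3 : (∑ j ∈ univ.filter (fun j => j ≠ i), bv (S' i j) * bv (S' j i) * bv (S' j j))
      = ∑ j ∈ univ.filter (fun j => j ≠ i), bv (S' i j) * bv (S j i) * bv (S j j) :=
    Finset.sum_congr rfl (fun j hj => by rw [hr j i (hmem j hj), hr j j (hmem j hj)])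
  have p5 : (∑ j ∈ univ.filter (fun j => j ≠ i), bv (S' i j) * bv (S' j i))
      = ∑ j ∈ univ.filter (fun j => j ≠ i), bv (S' i j) * bv (S j i) :=
    Finset.sum_congr rfl (fun j hj => by rw [hr j i (hmem j hj)])
  have p6 : (∑ j ∈ univ.filter (fun j => j ≠ i),
        ∑ l ∈ univ.filter (fun l => l ≠ i ∧ l ≠ j), bv (S' i j) * bv (S' j l) * bv (S' l i))
      = ∑ j ∈ univ.filter (fun j => j ≠ i),
        ∑ l ∈ univ.filter (fun l => l ≠ i ∧ l ≠ j), bv (S' i j) * bv (S j l) * bv (S l i) :=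
    Finset.sum_congr rfl (fun j hj => Finset.sum_congr rfl (fun l hl => by
      have hli : l ≠ i := by simp at hl; exact hl.1
      rw [hr j l (hmem j hj), hr l i hli]))
  simp only [potential, payoff]
  rw [p2, p3, p5, p6]
  linear_combination d1 + (h/2)*d2 + (φ/2)*d3 + d4 + (m/2)*d5 + (q/3)*d6


/-- **Characterization of `k`-player Nash stability via the potential.** `S` is `k`-player Nash
stable iff for every player `i`, every subset `Ir` with `i ∈ Ir` and `|Ir| ≤ k`, and every state
`S'` differing from `S` only in the coordinates `(a_i, {g_{ij} : j ∈ Ir, j ≠ i})`, one has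
`Φ(S) ≥ Φ(S')`. -/
theorem kPS_iff_potential (n k : ℕ) (hk : 1 < k) (hkn : k ≤ n)
    (v : Fin n → ℝ) (w : Fin n → Fin n → ℝ) (h φ m q : ℝ) (S : NetState n) :
    kPS n v w h φ m q k S ↔
      ∀ i : Fin n, ∀ Ir : Finset (Fin n), i ∈ Ir → Ir.card ≤ k →
        ∀ S' : NetState n, deviatesOnly n i Ir S S' →
          potential n v w h φ m q S' ≤ potential n v w h φ m q S := by
  constructor
  · intro hPS i Ir hi hcard S' hdev
    obtain ⟨Ik, hsub, hcardk⟩ := Finset.exists_superset_card_eq hcard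
      (by simpa using hkn)
    have hdev' : deviatesOnly n i Ik S S' := fun x y hxy =>
      hdev x y (fun hc => hxy ⟨hc.1, hsub hc.2⟩)
    have hp := hPS Ik hcardk i (hsub hi) S' hdev'
    have hd := pot_diff v w h φ m q S S' i
      (fun x y hx => hdev x y (fun hc => hx hc.1))
    linarith
  · intro hP Ik hcardk i hi S' hdev
    have hp := hP i Ik hi (le_of_eq hcardk) S' hdev
    have hd := pot_diff v w h φ m q S S' i
      (fun x y hx => hdev x y (fun hc => hx hc.1))
    linarith
end
end

section
/- Best-response updates weakly increase the potential: let μ = (i, I_{k-1}) be a meeting of dimension k and let S' ∈ N_k(μ, S) satisfy u_i(S') ≥ u_i(Ŝ) for all Ŝ ∈ N_k(μ, S) (i.e., S' is a best response of player i in the meeting). Then Φ(S') ≥ Φ(Ŝ) for all Ŝ ∈ N_k(μ, S); in particular Φ(S') ≥ Φ(S). -/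
open Finset

noncomputable section

/-- `S'` belongs to the neighborhood `N_k((i,J), S)`: it agrees with `S` on all coordinates
except possibly `a_i` (the coordinate `(i,i)`) and the links `{g_{ij} : j ∈ J}`. -/
def inNbhd (n : ℕ) (i : Fin n) (J : Finset (Fin n)) (S S' : NetState n) : Prop :=
  ∀ x y : Fin n, ¬(x = i ∧ (y = i ∨ y ∈ J)) → S' x y = S x y

open scoped Classical in
/-- The neighborhood `N_k((i,J), S)` as a finite set of states. -/
noncomputable def nbhd (n : ℕ) (i : Fin n) (J : Finset (Fin n)) (S : NetState n) :
    Finset (NetState n) :=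
  univ.filter (fun S' => inNbhd n i J S S')
/-!
`Φ` is an exact potential for changes of a single row: if `T` and `T'` differ only in player
`i`'s row (`a_i` and the links `g_{ij}`), then `Φ(T') - Φ(T) = u_i(T') - u_i(T)`. Indeed the
pairwise terms of `Φ` that involve `i` are counted twice and the triangles through `i` three
times, which the factors `1/2` and `1/3` cancel. All states of a neighborhood `N_k((i, J), S)`
differ from one another only in row `i`, so maximizing `u_i` over it maximizes `Φ`.
-/

section SumsThroughOneIndex

variable {α R : Type*} [Fintype α] [CommRing R] (i : α)

lemma sum_sub_sum_eq_of_eq_of_ne (f f' : α → R) (hf : ∀ x, x ≠ i → f' x = f x) :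
    ∑ x, f' x - ∑ x, f x = f' i - f i := by
  rw [← sum_sub_distrib, sum_eq_single i fun x _ hx => sub_eq_zero.2 (hf x hx)]
  simp

variable [DecidableEq α]

lemma sum_eq_add_sum_filter_ne (f : α → R) :
    ∑ x, f x = f i + ∑ x ∈ univ.filter (· ≠ i), f x := by
  rw [filter_ne', add_sum_erase _ f (mem_univ i)]

lemma sum_offDiag_sub_eq_row_sub (F F' : α → α → R)
    (hF : ∀ x, x ≠ i → ∀ y, F' x y = F x y) :
    (∑ x, ∑ y ∈ univ.filter (· ≠ x), F' x y) - ∑ x, ∑ y ∈ univ.filter (· ≠ x), F x y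
      = ∑ y ∈ univ.filter (· ≠ i), F' i y - ∑ y ∈ univ.filter (· ≠ i), F i y :=
  sum_sub_sum_eq_of_eq_of_ne i _ _ fun x hx => sum_congr rfl fun y _ => hF x hx y

lemma sum_offDiag_sub_eq_two_mul_row_sub (F F' : α → α → R)
    (hF : ∀ x y, F x y = F y x) (hF' : ∀ x y, F' x y = F' y x)
    (hFF' : ∀ x y, x ≠ i → y ≠ i → F' x y = F x y) :
    (∑ x, ∑ y ∈ univ.filter (· ≠ x), F' x y) - ∑ x, ∑ y ∈ univ.filter (· ≠ x), F x y
      = 2 * (∑ y ∈ univ.filter (· ≠ i), F' i y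
        - ∑ y ∈ univ.filter (· ≠ i), F i y) := by
  set D : α → α → R := fun x y => F' x y - F x y
  have hcol : ∀ x ∈ univ.filter (· ≠ i), ∑ y ∈ univ.filter (· ≠ x), D x y = D i x := by
    intro x hx
    rw [mem_filter] at hx
    rw [sum_eq_single_of_mem i (by simpa using hx.2.symm)
      fun y _ hy => sub_eq_zero.2 (hFF' x y hx.2 hy)]
    simp only [D, hF x i, hF' x i]
  calc _ = ∑ x, ∑ y ∈ univ.filter (· ≠ x), D x y := by simp only [D, ← sum_sub_distrib]
    _ = ∑ y ∈ univ.filter (· ≠ i), D i y + ∑ x ∈ univ.filter (· ≠ i), D i x := by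
      rw [sum_eq_add_sum_filter_ne i, sum_congr rfl hcol]
    _ = _ := by simp only [D, sum_sub_distrib]; ring

lemma sum_distinctTriples_sub_eq_three_mul_row_sub (F F' : α → α → α → R)
    (hF : ∀ x y l, F x y l = F y l x) (hF' : ∀ x y l, F' x y l = F' y l x)
    (hFF' : ∀ x y l, x ≠ i → y ≠ i → l ≠ i → F' x y l = F x y l) :
    (∑ x, ∑ y ∈ univ.filter (· ≠ x), ∑ l ∈ univ.filter (fun l => l ≠ x ∧ l ≠ y), F' x y l)
        - ∑ x, ∑ y ∈ univ.filter (· ≠ x),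
          ∑ l ∈ univ.filter (fun l => l ≠ x ∧ l ≠ y), F x y l
      = 3 * (∑ y ∈ univ.filter (· ≠ i),
          ∑ l ∈ univ.filter (fun l => l ≠ i ∧ l ≠ y), F' i y l
        - ∑ y ∈ univ.filter (· ≠ i),
          ∑ l ∈ univ.filter (fun l => l ≠ i ∧ l ≠ y), F i y l) := by
  set D : α → α → α → R := fun x y l => F' x y l - F x y l
  have hD : ∀ x y l, D x y l = D y l x := fun x y l => by simp only [D, hF x y l, hF' x y l]
  -- A distinct triple starting at `x ≠ i` only counts if `i` is its second or third entry;
  -- rotating it then makes it start at `i`.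
  have hrow : ∀ x ∈ univ.filter (· ≠ i),
      ∑ y ∈ univ.filter (· ≠ x), ∑ l ∈ univ.filter (fun l => l ≠ x ∧ l ≠ y), D x y l
        = ∑ l ∈ univ.filter (fun l => l ≠ i ∧ l ≠ x), D i l x
          + ∑ y ∈ univ.filter (fun y => y ≠ i ∧ y ≠ x), D i x y := by
    intro x hx
    rw [mem_filter] at hx
    rw [← add_sum_erase _ _ (by simpa using hx.2.symm : i ∈ univ.filter (· ≠ x))]
    congr 1
    · exact sum_congr (by ext; simp [and_comm]) fun l _ => hD x i l
    · refine sum_congr (by ext; simp) fun y hy => ?_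
      simp only [mem_filter, mem_univ, true_and] at hy
      rw [sum_eq_single_of_mem i (by simp [hx.2.symm, hy.1.symm])
        fun l _ hl => sub_eq_zero.2 (hFF' x y l hx.2 hy.1 hl)]
      exact (hD x y i).trans (hD y i x)
  have hswap :
      ∑ x ∈ univ.filter (· ≠ i), ∑ l ∈ univ.filter (fun l => l ≠ i ∧ l ≠ x), D i l x
        = ∑ y ∈ univ.filter (· ≠ i), ∑ l ∈ univ.filter (fun l => l ≠ i ∧ l ≠ y), D i y l :=
    sum_comm' fun x l => by simp only [mem_filter, mem_univ, true_and]; tauto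
  calc _ = ∑ x, ∑ y ∈ univ.filter (· ≠ x),
        ∑ l ∈ univ.filter (fun l => l ≠ x ∧ l ≠ y), D x y l := by
        simp only [D, ← sum_sub_distrib]
    _ = 3 * ∑ y ∈ univ.filter (· ≠ i),
        ∑ l ∈ univ.filter (fun l => l ≠ i ∧ l ≠ y), D i y l := by
      rw [sum_eq_add_sum_filter_ne i, sum_congr rfl hrow, sum_add_distrib, hswap]
      ring
    _ = _ := by simp only [D, sum_sub_distrib]

end SumsThroughOneIndex

lemma potential_sub_potential_eq_payoff_sub_payoff {n : ℕ} (v : Fin n → ℝ)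
    (w : Fin n → Fin n → ℝ) (h φ m q : ℝ) (i : Fin n) (T T' : NetState n)
    (hT : ∀ x, x ≠ i → ∀ y, T' x y = T x y) :
    potential n v w h φ m q T' - potential n v w h φ m q T
      = payoff n v w h φ m q T' i - payoff n v w h φ m q T i := by
  have hv := sum_sub_sum_eq_of_eq_of_ne i (fun x => bv (T x x) * v x)
    (fun x => bv (T' x x) * v x) fun x hx => by rw [hT x hx]
  have hh := sum_offDiag_sub_eq_two_mul_row_sub i (fun x y => bv (T x x) * bv (T y y))
    (fun x y => bv (T' x x) * bv (T' y y)) (fun _ _ => mul_comm _ _) (fun _ _ => mul_comm _ _)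
    fun x y hx hy => by rw [hT x hx, hT y hy]
  have hφ := sum_offDiag_sub_eq_two_mul_row_sub i
    (fun x y => bv (T x x) * bv (T y y) * bv (T x y) * bv (T y x))
    (fun x y => bv (T' x x) * bv (T' y y) * bv (T' x y) * bv (T' y x))
    (fun _ _ => by ring) (fun _ _ => by ring) fun x y hx hy => by simp only [hT x hx, hT y hy]
  have hw := sum_offDiag_sub_eq_row_sub i (fun x y => bv (T x y) * w x y)
    (fun x y => bv (T' x y) * w x y) fun x hx y => by rw [hT x hx]
  have hm := sum_offDiag_sub_eq_two_mul_row_sub i (fun x y => bv (T x y) * bv (T y x))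
    (fun x y => bv (T' x y) * bv (T' y x)) (fun _ _ => mul_comm _ _) (fun _ _ => mul_comm _ _)
    fun x y hx hy => by rw [hT x hx, hT y hy]
  have hq := sum_distinctTriples_sub_eq_three_mul_row_sub i
    (fun x y l => bv (T x y) * bv (T y l) * bv (T l x))
    (fun x y l => bv (T' x y) * bv (T' y l) * bv (T' l x))
    (fun _ _ _ => by ring) (fun _ _ _ => by ring) fun x y l hx hy hl => by
      rw [hT x hx, hT y hy, hT l hl]
  have hothers : ∑ j ∈ univ.filter (· ≠ i), bv (T' j j) = ∑ j ∈ univ.filter (· ≠ i), bv (T j j) :=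
    sum_congr rfl fun j hj => by rw [hT j (mem_filter.1 hj).2]
  have hrow_h (U : NetState n) : ∑ j ∈ univ.filter (· ≠ i), bv (U i i) * bv (U j j)
      = bv (U i i) * ∑ j ∈ univ.filter (· ≠ i), bv (U j j) := (mul_sum ..).symm
  have hrow_φ (U : NetState n) :
      ∑ j ∈ univ.filter (· ≠ i), bv (U i i) * bv (U j j) * bv (U i j) * bv (U j i)
        = bv (U i i) * ∑ j ∈ univ.filter (· ≠ i), bv (U i j) * bv (U j i) * bv (U j j) := by
    rw [mul_sum]
    exact sum_congr rfl fun _ _ => by ring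
  simp only [hrow_h, hrow_φ, hothers] at hh hφ
  unfold potential payoff
  rw [hothers]
  linear_combination hv + (h / 2) * hh + (φ / 2) * hφ + hw + (m / 2) * hm + (q / 3) * hq

lemma inNbhd.eq_of_ne {n : ℕ} {i : Fin n} {J : Finset (Fin n)} {S T T' : NetState n}
    (hT : inNbhd n i J S T) (hT' : inNbhd n i J S T') : ∀ x, x ≠ i → ∀ y, T' x y = T x y :=
  fun x hx y => by rw [hT' x y (by tauto), hT x y (by tauto)]

theorem bestResponse_increases_potential_general (n : ℕ)
    (v : Fin n → ℝ) (w : Fin n → Fin n → ℝ) (h φ m q : ℝ)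
    (i : Fin n) (J : Finset (Fin n))
    (S S' : NetState n) (hS' : inNbhd n i J S S')
    (hbr : ∀ T : NetState n, inNbhd n i J S T →
      payoff n v w h φ m q T i ≤ payoff n v w h φ m q S' i) :
    (∀ T : NetState n, inNbhd n i J S T →
        potential n v w h φ m q T ≤ potential n v w h φ m q S')
      ∧ potential n v w h φ m q S ≤ potential n v w h φ m q S' := by
  have hmax : ∀ T : NetState n, inNbhd n i J S T →
      potential n v w h φ m q T ≤ potential n v w h φ m q S' := fun T hT => by
    have := potential_sub_potential_eq_payoff_sub_payoff v w h φ m q i T S' (hT.eq_of_ne hS')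
    linarith [hbr T hT]
  exact ⟨hmax, hmax S fun _ _ _ => rfl⟩

/-- **Best-response updates weakly increase the potential.** Let `μ = (i, J)` be a meeting of
dimension `k` (so `i ∉ J` and `|J| = k − 1`) and let `S' ∈ N_k(μ, S)` be a best response of
player `i` in the meeting, i.e. `u_i(S') ≥ u_i(T)` for all `T ∈ N_k(μ, S)`. Then
`Φ(S') ≥ Φ(T)` for all `T ∈ N_k(μ, S)`; in particular `Φ(S') ≥ Φ(S)`. -/
theorem bestResponse_increases_potential (n k : ℕ) (hk : 1 < k) (hkn : k ≤ n)
    (v : Fin n → ℝ) (w : Fin n → Fin n → ℝ) (h φ m q : ℝ)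
    (i : Fin n) (J : Finset (Fin n)) (hiJ : i ∉ J) (hJ : J.card = k - 1)
    (S S' : NetState n) (hS' : inNbhd n i J S S')
    (hbr : ∀ T : NetState n, inNbhd n i J S T →
      payoff n v w h φ m q T i ≤ payoff n v w h φ m q S' i) :
    (∀ T : NetState n, inNbhd n i J S T →
        potential n v w h φ m q T ≤ potential n v w h φ m q S')
      ∧ potential n v w h φ m q S ≤ potential n v w h φ m q S' :=
  bestResponse_increases_potential_general n v w h φ m q i J S S' hS' hbr
end
end

section
/- Detailed balance for the k-player logit dynamic: for all states S, S' ∈ 𝒮_n, exp(Φ(S)/β) · P_k(S, S') = exp(Φ(S')/β) · P_k(S', S). -/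
open Finset

noncomputable section

open scoped Classical in
/-- Meetings of dimension `k`: pairs `(i, J)` with `i ∉ J` and `|J| = k - 1`. -/
noncomputable def meetings (n k : ℕ) : Finset (Fin n × Finset (Fin n)) :=
  univ.filter (fun μ => μ.1 ∉ μ.2 ∧ μ.2.card = k - 1)

open scoped Classical in
/-- One-step transition kernel of the `k`-player logit dynamic:
`P_k(S, S') = Σ_{μ=(i,J) : S' ∈ N_k(μ,S)} q(μ) · exp(u_i(S')/β) / Σ_{T ∈ N_k(μ,S)} exp(u_i(T)/β)`. -/
noncomputable def kernel (n : ℕ) (v : Fin n → ℝ) (w : Fin n → Fin n → ℝ) (h φ m q : ℝ)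
    (β : ℝ) (k : ℕ) (qm : Fin n × Finset (Fin n) → ℝ) (S S' : NetState n) : ℝ :=
  ∑ μ ∈ (meetings n k).filter (fun μ => S' ∈ nbhd n μ.1 μ.2 S),
    qm μ * Real.exp (payoff n v w h φ m q S' μ.1 / β)
      / ∑ T ∈ nbhd n μ.1 μ.2 S, Real.exp (payoff n v w h φ m q T μ.1 / β)

/-!
Player `i`'s payoff collects exactly the terms of the potential that involve row `i` of the
state (its action `a_i` and its out-links `g_{ij}`): each symmetric pair term of `Φ` is counted
twice in the double sum over ordered pairs and each cyclic triangle term three times, which the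
factors `1/2` and `1/3` cancel. So a move that changes only row `i` changes `Φ` and `u_i` by the
same amount, i.e. `Φ` is an exact potential, and the logit kernel then satisfies detailed
balance term by term: `S` and `S'` lie in the same neighborhood of a meeting, so the
normalizing sums coincide and `exp(Φ(S)/β) exp(u_i(S')/β) = exp(Φ(S')/β) exp(u_i(S)/β)`.
-/

section OffDiagonalSums

variable {ι M : Type*} [DecidableEq ι] [AddCommMonoid M]

theorem sum_sum_erase_comm (s : Finset ι) (F : ι → ι → M) :
    ∑ y ∈ s, ∑ z ∈ s.erase y, F y z = ∑ y ∈ s, ∑ z ∈ s.erase y, F z y :=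
  sum_comm' fun y z => by simp only [mem_erase]; tauto

variable [Fintype ι]

theorem filter_ne_and_ne (a b : ι) :
    univ.filter (fun l => l ≠ a ∧ l ≠ b) = (univ.erase a).erase b := by
  ext l; simp [and_comm]

variable (i : ι)

theorem sum_sum_erase_eq_of_eq_zero (d : ι → ι → M)
    (hd : ∀ x y, x ≠ i → y ≠ i → d x y = 0) :
    ∑ x, ∑ y ∈ univ.erase x, d x y = ∑ y ∈ univ.erase i, (d i y + d y i) := by
  have hrow : ∀ x ∈ univ.erase i, ∑ y ∈ univ.erase x, d x y = d x i := fun x hx =>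
    sum_eq_single_of_mem i (by simpa [eq_comm] using hx)
      fun y hy hyi => hd x y (ne_of_mem_erase hx) hyi
  rw [← add_sum_erase _ _ (mem_univ i), sum_congr rfl hrow, sum_add_distrib]

theorem sum_sum_sum_erase_eq_of_eq_zero (d : ι → ι → ι → M)
    (hd : ∀ x y z, x ≠ i → y ≠ i → z ≠ i → d x y z = 0) :
    ∑ x, ∑ y ∈ univ.erase x, ∑ z ∈ (univ.erase x).erase y, d x y z
      = ∑ y ∈ univ.erase i, ∑ z ∈ (univ.erase i).erase y,
          (d i y z + d y i z + d y z i) := by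
  have hrow : ∀ x ∈ univ.erase i, ∑ y ∈ univ.erase x, ∑ z ∈ (univ.erase x).erase y, d x y z
      = ∑ z ∈ (univ.erase i).erase x, (d x i z + d x z i) := by
    intro x hx
    have hxi := ne_of_mem_erase hx
    have hcol : ∀ y ∈ (univ.erase x).erase i,
        ∑ z ∈ (univ.erase x).erase y, d x y z = d x y i := fun y hy =>
      sum_eq_single_of_mem i (by simp_all [eq_comm])
        fun z hz hzi => hd x y z hxi (ne_of_mem_erase hy) hzi
    rw [← add_sum_erase _ _ (by simpa [eq_comm] using hxi : i ∈ univ.erase x),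
      sum_congr rfl hcol, erase_right_comm, sum_add_distrib]
  rw [← add_sum_erase _ _ (mem_univ i), sum_congr rfl hrow, ← sum_add_distrib]
  exact sum_congr rfl fun y _ => by rw [← sum_add_distrib]; simp only [add_assoc]

end OffDiagonalSums

section OffDiagonalDifferences

variable {ι M : Type*} [Fintype ι] [AddCommGroup M] (i : ι)

theorem sum_sub_sum_eq_of_ne {f g : ι → M} (hfg : ∀ x, x ≠ i → f x = g x) :
    ∑ x, f x - ∑ x, g x = f i - g i := by
  rw [← sum_sub_distrib]
  exact sum_eq_single i (fun x _ hx => sub_eq_zero.2 (hfg x hx)) (by simp)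

variable [DecidableEq ι]

theorem sum_sum_erase_sub_eq_of_ne {f g : ι → ι → M} (hfg : ∀ x, x ≠ i → f x = g x) :
    ∑ x, ∑ y ∈ univ.erase x, f x y - ∑ x, ∑ y ∈ univ.erase x, g x y
      = ∑ y ∈ univ.erase i, f i y - ∑ y ∈ univ.erase i, g i y :=
  sum_sub_sum_eq_of_ne i fun x hx => by rw [hfg x hx]

theorem sum_sum_erase_sub_eq_of_symm {f g : ι → ι → M}
    (hfg : ∀ x y, x ≠ i → y ≠ i → f x y = g x y)
    (hf : ∀ x y, f x y = f y x) (hg : ∀ x y, g x y = g y x) :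
    ∑ x, ∑ y ∈ univ.erase x, f x y - ∑ x, ∑ y ∈ univ.erase x, g x y
      = 2 • (∑ y ∈ univ.erase i, f i y - ∑ y ∈ univ.erase i, g i y) := by
  simp only [← sum_sub_distrib]
  rw [sum_sum_erase_eq_of_eq_zero i _ fun x y hx hy => sub_eq_zero.2 (hfg x y hx hy), smul_sum]
  exact sum_congr rfl fun y _ => by rw [hf y i, hg y i, two_nsmul]

theorem sum_sum_sum_erase_sub_eq_of_cyclic {f g : ι → ι → ι → M}
    (hfg : ∀ x y z, x ≠ i → y ≠ i → z ≠ i → f x y z = g x y z)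
    (hf : ∀ x y z, f x y z = f y z x) (hg : ∀ x y z, g x y z = g y z x) :
    ∑ x, ∑ y ∈ univ.erase x, ∑ z ∈ (univ.erase x).erase y, f x y z
        - ∑ x, ∑ y ∈ univ.erase x, ∑ z ∈ (univ.erase x).erase y, g x y z
      = 3 • (∑ y ∈ univ.erase i, ∑ z ∈ (univ.erase i).erase y, f i y z
          - ∑ y ∈ univ.erase i, ∑ z ∈ (univ.erase i).erase y, g i y z) := by
  simp only [← sum_sub_distrib]
  rw [sum_sum_sum_erase_eq_of_eq_zero i _
    fun x y z hx hy hz => sub_eq_zero.2 (hfg x y z hx hy hz)]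
  have hmid : ∀ y z, f y i z - g y i z = f i z y - g i z y := fun y z => by rw [hf, hg]
  have hlast : ∀ y z, f y z i - g y z i = f i y z - g i y z := fun y z => by
    rw [hf y, hf z, hg y, hg z]
  simp only [hmid, hlast, sum_add_distrib]
  rw [sum_sum_erase_comm _ fun y z => f i z y - g i z y]
  abel

end OffDiagonalDifferences

section NetworkGame

variable {n : ℕ} (v : Fin n → ℝ) (w : Fin n → Fin n → ℝ) (h φ m q : ℝ)

theorem potential_sub_potential {S S' : NetState n} {i : Fin n}
    (hS : ∀ x, x ≠ i → S x = S' x) :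
    potential n v w h φ m q S - potential n v w h φ m q S'
      = payoff n v w h φ m q S i - payoff n v w h φ m q S' i := by
  have e : ∀ x y, x ≠ i → S x y = S' x y := fun x y hx => congrFun (hS x hx) y
  have hA := sum_sub_sum_eq_of_ne i (f := fun x => bv (S x x) * v x)
    (g := fun x => bv (S' x x) * v x) fun x hx => by rw [e x x hx]
  have hH : ∑ x, ∑ y ∈ univ.erase x, bv (S x x) * bv (S y y)
        - ∑ x, ∑ y ∈ univ.erase x, bv (S' x x) * bv (S' y y)
      = 2 • (bv (S i i) * ∑ y ∈ univ.erase i, bv (S y y)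
          - bv (S' i i) * ∑ y ∈ univ.erase i, bv (S' y y)) := by
    rw [mul_sum, mul_sum]
    exact sum_sum_erase_sub_eq_of_symm i (fun x y hx hy => by rw [e x x hx, e y y hy])
      (fun _ _ => mul_comm _ _) (fun _ _ => mul_comm _ _)
  have hΦ := sum_sum_erase_sub_eq_of_symm i
    (f := fun x y => bv (S x x) * bv (S y y) * bv (S x y) * bv (S y x))
    (g := fun x y => bv (S' x x) * bv (S' y y) * bv (S' x y) * bv (S' y x))
    (fun x y hx hy => by rw [e x x hx, e y y hy, e x y hx, e y x hy])
    (fun _ _ => by ring) (fun _ _ => by ring)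
  have hW := sum_sum_erase_sub_eq_of_ne i (f := fun x y => bv (S x y) * w x y)
    (g := fun x y => bv (S' x y) * w x y) fun x hx => by rw [hS x hx]
  have hM := sum_sum_erase_sub_eq_of_symm i (f := fun x y => bv (S x y) * bv (S y x))
    (g := fun x y => bv (S' x y) * bv (S' y x))
    (fun x y hx hy => by rw [e x y hx, e y x hy]) (fun _ _ => mul_comm _ _)
    (fun _ _ => mul_comm _ _)
  have hQ := sum_sum_sum_erase_sub_eq_of_cyclic i
    (f := fun x y z => bv (S x y) * bv (S y z) * bv (S z x))
    (g := fun x y z => bv (S' x y) * bv (S' y z) * bv (S' z x))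
    (fun x y z hx hy hz => by rw [e x y hx, e y z hy, e z x hz])
    (fun _ _ _ => by ring) (fun _ _ _ => by ring)
  have hrow : ∀ T : NetState n,
      bv (T i i) * ∑ y ∈ univ.erase i, bv (T i y) * bv (T y i) * bv (T y y)
        = ∑ y ∈ univ.erase i, bv (T i i) * bv (T y y) * bv (T i y) * bv (T y i) := fun T => by
    rw [mul_sum]; exact sum_congr rfl fun _ _ => by ring
  simp only [potential, payoff, filter_ne', filter_ne_and_ne, mul_assoc h, mul_assoc φ, hrow]
  linear_combination hA + h / 2 * hH + φ / 2 * hΦ + hW + m / 2 * hM + q / 3 * hQ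

theorem exp_potential_mul_exp_payoff {S S' : NetState n} {i : Fin n}
    (hS : ∀ x, x ≠ i → S x = S' x) (β : ℝ) :
    Real.exp (potential n v w h φ m q S / β) * Real.exp (payoff n v w h φ m q S' i / β)
      = Real.exp (potential n v w h φ m q S' / β) * Real.exp (payoff n v w h φ m q S i / β) := by
  rw [← Real.exp_add, ← Real.exp_add, ← add_div, ← add_div]
  congr 2
  linarith [potential_sub_potential v w h φ m q hS]

end NetworkGame

section Neighborhoods

variable {n : ℕ} {i : Fin n} {J : Finset (Fin n)} {S S' T : NetState n}

theorem inNbhd_comm : inNbhd n i J S S' ↔ inNbhd n i J S' S :=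
  ⟨fun hS x y hxy => (hS x y hxy).symm, fun hS x y hxy => (hS x y hxy).symm⟩

theorem inNbhd.trans (hS : inNbhd n i J S S') (hT : inNbhd n i J S' T) : inNbhd n i J S T :=
  fun x y hxy => (hT x y hxy).trans (hS x y hxy)

theorem inNbhd.row_eq (hS : inNbhd n i J S S') : ∀ x, x ≠ i → S x = S' x :=
  fun x hx => funext fun y => (hS x y fun hxy => hx hxy.1).symm

theorem mem_nbhd : S' ∈ nbhd n i J S ↔ inNbhd n i J S S' := by
  simp [nbhd]

theorem mem_nbhd_comm : S' ∈ nbhd n i J S ↔ S ∈ nbhd n i J S' := by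
  rw [mem_nbhd, mem_nbhd, inNbhd_comm]

theorem nbhd_eq_of_mem (hS : S' ∈ nbhd n i J S) : nbhd n i J S' = nbhd n i J S := by
  ext T
  rw [mem_nbhd, mem_nbhd] at *
  exact ⟨hS.trans, (inNbhd_comm.1 hS).trans⟩

end Neighborhoods

theorem detailed_balance_general (n k : ℕ)
    (v : Fin n → ℝ) (w : Fin n → Fin n → ℝ) (h φ m q : ℝ) (β : ℝ)
    (qm : Fin n × Finset (Fin n) → ℝ)
    (S S' : NetState n) :
    Real.exp (potential n v w h φ m q S / β) * kernel n v w h φ m q β k qm S S'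
      = Real.exp (potential n v w h φ m q S' / β) * kernel n v w h φ m q β k qm S' S := by
  unfold kernel
  rw [mul_sum, mul_sum, filter_congr fun μ _ => mem_nbhd_comm]
  refine sum_congr rfl fun μ hμ => ?_
  have hmem : S' ∈ nbhd n μ.1 μ.2 S := mem_nbhd_comm.2 (mem_filter.1 hμ).2
  rw [nbhd_eq_of_mem hmem, mul_div_assoc', mul_div_assoc']
  congr 1
  linear_combination qm μ * exp_potential_mul_exp_payoff v w h φ m q
    (inNbhd.row_eq (mem_nbhd.1 hmem)) β

/-- **Detailed balance for the `k`-player logit dynamic.** For all states `S, S'`,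
`exp(Φ(S)/β) · P_k(S, S') = exp(Φ(S')/β) · P_k(S', S)`. -/
theorem detailed_balance (n k : ℕ) (hk : 1 < k) (hkn : k ≤ n)
    (v : Fin n → ℝ) (w : Fin n → Fin n → ℝ) (h φ m q : ℝ) (β : ℝ) (hβ : 0 < β)
    (qm : Fin n × Finset (Fin n) → ℝ)
    (hqpos : ∀ μ ∈ meetings n k, 0 < qm μ)
    (hqsum : ∑ μ ∈ meetings n k, qm μ = 1)
    (S S' : NetState n) :
    Real.exp (potential n v w h φ m q S / β) * kernel n v w h φ m q β k qm S S'
      = Real.exp (potential n v w h φ m q S' / β) * kernel n v w h φ m q β k qm S' S :=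
  detailed_balance_general n k v w h φ m q β qm S S'
end
end

section
/- Eigenfunctions of the uniform k-player dynamic: suppose the potential is constant (all payoff parameters zero) and meetings of dimension k are drawn uniformly, so the transition kernel is P_k(S, S') = Σ_{μ : S' ∈ N_k(μ, S)} 1/(n · C(n−1, k−1) · 2^k). Then for every subset I ⊆ I × I and every state S, Σ_{S' ∈ 𝒮_n} P_k(S, S') e_I(S') = λ_{k,I} · e_I(S), where λ_{k,I} = [Σ_{i : (i,i) ∉ I} C(n−1−|I_i|, k−1)] / [n · C(n−1, k−1)] and I_i = {j ≠ i : (i,j) ∈ I} (with C(m, r) = 0 for m < r). In particular the 2^{n²} pairs (λ_{k,I}, e_I) are a complete eigensystem of P_k. -/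
open Finset

noncomputable section

/-- The sign character `e_K(S) = Π_{(i,j)∈K, i≠j} (−1)^{g_{ij}} · Π_{(i,i)∈K} (−1)^{a_i}`
(in the unified coordinate representation, the coordinate `(i,j)` of `S` is `S i j`). -/
def charFn (n : ℕ) (K : Finset (Fin n × Fin n)) (S : NetState n) : ℝ :=
  ∏ p ∈ K, (if S p.1 p.2 then (-1 : ℝ) else 1)

/-- `I_i = {j ≠ i : (i,j) ∈ K}`. -/
def lamIdx (n : ℕ) (K : Finset (Fin n × Fin n)) (i : Fin n) : Finset (Fin n) :=
  univ.filter (fun j => j ≠ i ∧ (i, j) ∈ K)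

open scoped Classical in
/-- The eigenvalue `λ_{k,K} = [Σ_{i : (i,i) ∉ K} C(n−1−|I_i|, k−1)] / [n · C(n−1, k−1)]`. -/
noncomputable def lam (n k : ℕ) (K : Finset (Fin n × Fin n)) : ℝ :=
  (∑ i ∈ univ.filter (fun i => (i, i) ∉ K),
      (((n - 1 - (lamIdx n K i).card).choose (k - 1) : ℕ) : ℝ))
    / ((n : ℝ) * (((n - 1).choose (k - 1) : ℕ) : ℝ))

open scoped Classical in
/-- Transition kernel of the uniform `k`-player dynamic (constant potential, uniform meetings):
`P_k(S, S') = Σ_{μ : S' ∈ N_k(μ, S)} 1/(n · C(n−1, k−1) · 2^k)`. -/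
noncomputable def uKernel (n k : ℕ) (S S' : NetState n) : ℝ :=
  ∑ _μ ∈ (meetings n k).filter (fun μ => S' ∈ nbhd n μ.1 μ.2 S),
    1 / ((n : ℝ) * (((n - 1).choose (k - 1) : ℕ) : ℝ) * 2 ^ k)

/-! Every neighborhood `N_k((i, J), S)` is a subcube of the Boolean cube of states: the states
that agree with `S` off the `k` coordinates `C = {(i, i)} ∪ {(i, j) : j ∈ J}`. The sum of the
character `e_K` over such a subcube factors coordinatewise into `∑_b ± 1`, so it is `2^k e_K(S)`
when `K` avoids `C` and `0` otherwise. Hence `P_k e_K = e_K(S) · N / (n C(n-1, k-1))`, where `N`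
counts the meetings whose coordinates avoid `K`: those of player `i` exist only if `(i, i) ∉ K`,
and are then the `(k-1)`-subsets of the `n - 1 - |K_i|` links of `i` outside `K`. -/

theorem sum_piFinset_prod_sign {σ R : Type*} [Fintype σ] [DecidableEq σ] [CommRing R]
    (K C : Finset σ) (x : σ → Bool) :
    ∑ y ∈ Fintype.piFinset (fun p => if p ∈ C then univ else {x p}),
        ∏ p ∈ K, (if y p then (-1 : R) else 1)
      = if Disjoint K C then 2 ^ C.card * ∏ p ∈ K, (if x p then (-1 : R) else 1) else 0 := by
  have h := prod_univ_sum (fun p => if p ∈ C then univ else {x p})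
    (fun p (b : Bool) => if p ∈ K then (if b then (-1 : R) else 1) else 1)
  simp only [Fintype.prod_ite_mem] at h
  rw [← h]
  split_ifs with hKC
  · rw [← prod_const, ← Fintype.prod_ite_mem C, ← Fintype.prod_ite_mem K,
      ← prod_mul_distrib]
    refine prod_congr rfl fun p _ => ?_
    by_cases hC : p ∈ C
    · have hK : p ∉ K := disjoint_right.mp hKC hC
      simp [hC, hK]
    · simp [hC]
  · obtain ⟨p, hK, hC⟩ := not_disjoint_iff.mp hKC
    exact prod_eq_zero (mem_univ p) (by simp [hC, hK])

def nbhdCoords {n : ℕ} (i : Fin n) (J : Finset (Fin n)) : Finset (Fin n × Fin n) :=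
  {i} ×ˢ insert i J

theorem mem_nbhdCoords {n : ℕ} {i : Fin n} {J : Finset (Fin n)} {x y : Fin n} :
    (x, y) ∈ nbhdCoords i J ↔ x = i ∧ (y = i ∨ y ∈ J) := by
  rw [nbhdCoords, mem_product, mem_singleton, mem_insert]

theorem card_nbhdCoords {n : ℕ} (i : Fin n) (J : Finset (Fin n)) :
    (nbhdCoords i J).card = (insert i J).card := by
  rw [nbhdCoords, card_product, card_singleton, one_mul]

theorem sum_nbhd_charFn (n : ℕ) (i : Fin n) (J : Finset (Fin n)) (K : Finset (Fin n × Fin n))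
    (S : NetState n) :
    ∑ S' ∈ nbhd n i J S, charFn n K S'
      = if Disjoint K (nbhdCoords i J) then 2 ^ (insert i J).card * charFn n K S else 0 := by
  classical
  rw [← card_nbhdCoords]
  refine (sum_equiv (Equiv.curry _ _ _).symm (fun S' => ?_) (fun _ _ => rfl)).trans
    (sum_piFinset_prod_sign K (nbhdCoords i J) (Function.uncurry S))
  rw [nbhd, mem_filter_univ, inNbhd, Fintype.mem_piFinset, Prod.forall]
  refine forall₂_congr fun x y => ?_
  by_cases h : x = i ∧ (y = i ∨ y ∈ J) <;> simp [mem_nbhdCoords, h]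

theorem sum_uKernel_mul (n k : ℕ) (S : NetState n) (f : NetState n → ℝ) :
    ∑ S', uKernel n k S S' * f S'
      = 1 / ((n : ℝ) * (((n - 1).choose (k - 1) : ℕ) : ℝ) * 2 ^ k)
          * ∑ μ ∈ meetings n k, ∑ S' ∈ nbhd n μ.1 μ.2 S, f S' := by
  classical
  simp_rw [uKernel, sum_filter, sum_mul, mul_sum, ite_mul, zero_mul]
  rw [sum_comm]
  refine sum_congr rfl fun μ _ => ?_
  rw [sum_ite_mem, univ_inter]

theorem disjoint_nbhdCoords_iff {n : ℕ} (K : Finset (Fin n × Fin n)) (i : Fin n)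
    (J : Finset (Fin n)) :
    Disjoint K (nbhdCoords i J) ↔ (i, i) ∉ K ∧ ∀ j ∈ J, (i, j) ∉ K := by
  simp [disjoint_right, nbhdCoords]

theorem card_lamIdx_compl (n : ℕ) (K : Finset (Fin n × Fin n)) (i : Fin n) :
    ((univ.erase i) \ lamIdx n K i).card = n - 1 - (lamIdx n K i).card := by
  rw [card_sdiff_of_subset (fun j hj => by simp_all [lamIdx]), card_erase_of_mem (mem_univ i),
    card_univ, Fintype.card_fin]

theorem filter_meetings_fst_eq (n k : ℕ) (K : Finset (Fin n × Fin n)) (i : Fin n) :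
    ((meetings n k).filter (fun μ => Disjoint K (nbhdCoords μ.1 μ.2))).filter (·.1 = i)
      = if (i, i) ∈ K then ∅
        else {i} ×ˢ powersetCard (k - 1) ((univ.erase i) \ lamIdx n K i) := by
  ext ⟨i', J⟩
  split_ifs with hi
  · simp only [meetings, mem_filter, mem_univ, true_and, disjoint_nbhdCoords_iff, notMem_empty,
      iff_false]
    rintro ⟨⟨-, hi', -⟩, rfl⟩
    exact hi' hi
  · simp only [meetings, mem_filter, mem_univ, true_and, disjoint_nbhdCoords_iff, mem_product,
      mem_singleton, mem_powersetCard, subset_iff, mem_sdiff, mem_erase, lamIdx]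
    constructor
    · rintro ⟨⟨⟨hiJ, hJ⟩, -, hK⟩, rfl⟩
      refine ⟨rfl, fun j hj => ⟨⟨ne_of_mem_of_not_mem hj hiJ, trivial⟩, ?_⟩, hJ⟩
      exact fun h => hK j hj h.2
    · rintro ⟨rfl, hsub, hJ⟩
      refine ⟨⟨⟨fun h => (hsub h).1.1 rfl, hJ⟩, hi, fun j hj hK => ?_⟩, rfl⟩
      exact (hsub hj).2 ⟨(hsub hj).1.1, hK⟩

theorem card_meetings_filter_disjoint (n k : ℕ) (K : Finset (Fin n × Fin n)) :
    ((meetings n k).filter (fun μ => Disjoint K (nbhdCoords μ.1 μ.2))).card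
      = ∑ i ∈ univ.filter (fun i => (i, i) ∉ K),
          (n - 1 - (lamIdx n K i).card).choose (k - 1) := by
  rw [card_eq_sum_card_fiberwise (fun μ _ => mem_univ μ.1), sum_filter]
  refine sum_congr rfl fun i _ => ?_
  rw [filter_meetings_fst_eq]
  split_ifs with hi
  · rfl
  · rw [card_product, card_singleton, one_mul, card_powersetCard, card_lamIdx_compl]

theorem uKernel_eigen_general (n k : ℕ) (hk : 1 < k)
    (K : Finset (Fin n × Fin n)) (S : NetState n) :
    (∑ S' : NetState n, uKernel n k S S' * charFn n K S')
      = lam n k K * charFn n K S := by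
  have h_nbhd : ∀ μ ∈ meetings n k, ∑ S' ∈ nbhd n μ.1 μ.2 S, charFn n K S'
      = if Disjoint K (nbhdCoords μ.1 μ.2) then 2 ^ k * charFn n K S else 0 := by
    intro μ hμ
    obtain ⟨hiJ, hJ⟩ := (mem_filter.mp hμ).2
    rw [sum_nbhd_charFn, card_insert_of_notMem hiJ, hJ, Nat.sub_add_cancel hk.le]
  rw [sum_uKernel_mul, sum_congr rfl h_nbhd, ← sum_filter, sum_const, nsmul_eq_mul,
    card_meetings_filter_disjoint, lam, Nat.cast_sum]
  field_simp

/-- **Eigenfunctions of the uniform `k`-player dynamic.** For every subset `K` of coordinate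
indices and every state `S`, `Σ_{S'} P_k(S, S') e_K(S') = λ_{k,K} · e_K(S)`, where
`λ_{k,K} = [Σ_{i : (i,i) ∉ K} C(n−1−|K_i|, k−1)] / [n · C(n−1, k−1)]` and
`K_i = {j ≠ i : (i,j) ∈ K}`. (The `2^{n²}` pairs `(λ_{k,K}, e_K)` form a complete
eigensystem of `P_k`.) -/
theorem uKernel_eigen (n k : ℕ) (hk : 1 < k) (hkn : k ≤ n)
    (K : Finset (Fin n × Fin n)) (S : NetState n) :
    (∑ S' : NetState n, uKernel n k S S' * charFn n K S')
      = lam n k K * charFn n K S :=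
  uKernel_eigen_general n k hk K S
end
end

section
/- Second eigenvalue of the uniform k-player dynamic and monotone convergence speed: for the eigenvalues λ_{k,I} = [Σ_{i : (i,i) ∉ I} C(n−1−|I_i|, k−1)] / [n · C(n−1, k−1)] (where I_i = {j ≠ i : (i,j) ∈ I}): (i) λ_{k,∅} = 1; (ii) for every ordered pair i ≠ j, λ_{k,{(i,j)}} = (1/n)(n − 1 + (n−k)/(n−1)); (iii) for every nonempty I ⊆ I × I, λ_{k,I} ≤ (1/n)(n − 1 + (n−k)/(n−1)) < 1, so the second-largest eigenvalue of the uniform k-player dynamic equals (1/n)(n − 1 + (n−k)/(n−1)); and (iv) for 2 ≤ k < k' ≤ n this second eigenvalue is strictly smaller for k' than for k, i.e. the k'-player dynamic converges strictly faster to the stationary distribution than the k-player dynamic. -/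
open Finset

noncomputable section

/-! The eigenvalue is antitone in `K`: enlarging `K` removes summands and enlarges the sets
`I_i`, which can only shrink the binomial coefficients. Hence for nonempty `K` it suffices to
bound `λ_{k,{(a,b)}}`, which is `(n-1)·C(n-1,k-1) + C(n-2,k-1)` over `n·C(n-1,k-1)` when
`a ≠ b` and smaller when `a = b`. The identity `C(n-2,k-1)(n-1) = C(n-1,k-1)(n-k)` turns this
quotient into `(1/n)(n − 1 + (n−k)/(n−1))`, which is strictly decreasing in `k` and equals `1`
at `k = 1`. -/

def lamNum (n k : ℕ) (K : Finset (Fin n × Fin n)) : ℕ :=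
  ∑ i, if (i, i) ∈ K then 0 else (n - 1 - (lamIdx n K i).card).choose (k - 1)

def secondEigenvalue (n k : ℕ) : ℝ :=
  (1 / (n : ℝ)) * ((n : ℝ) - 1 + ((n : ℝ) - (k : ℝ)) / ((n : ℝ) - 1))

section Numerator

variable {n : ℕ} (k : ℕ)

theorem lam_eq_lamNum_div (K : Finset (Fin n × Fin n)) :
    lam n k K = lamNum n k K / ((n : ℝ) * (n - 1).choose (k - 1)) := by
  classical
  simp only [lam, lamNum, sum_filter, Nat.cast_sum, Nat.cast_ite, Nat.cast_zero]
  congr 1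
  exact sum_congr rfl fun i _ => by split_ifs <;> rfl

theorem lamIdx_mono {K K' : Finset (Fin n × Fin n)} (h : K ⊆ K') (i : Fin n) :
    lamIdx n K i ⊆ lamIdx n K' i :=
  monotone_filter_right _ fun _ _ hj => ⟨hj.1, h hj.2⟩

theorem lamNum_anti {K K' : Finset (Fin n × Fin n)} (h : K ⊆ K') :
    lamNum n k K' ≤ lamNum n k K := by
  refine sum_le_sum fun i _ => ?_
  by_cases hK' : (i, i) ∈ K'
  · simp [hK']
  · have hK : (i, i) ∉ K := fun hi => hK' (h hi)
    simp only [hK, hK', if_false]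
    exact Nat.choose_le_choose _ (Nat.sub_le_sub_left (card_le_card (lamIdx_mono h i)) _)

theorem lamNum_empty : lamNum n k ∅ = n * (n - 1).choose (k - 1) := by
  simp [lamNum, lamIdx]

theorem lamIdx_singleton (a b i : Fin n) :
    lamIdx n {(a, b)} i = if i = a ∧ b ≠ a then {b} else ∅ := by
  ext j
  simp only [lamIdx, mem_filter, mem_univ, true_and, mem_singleton, Prod.mk.injEq]
  split_ifs <;> grind

theorem lamNum_singleton (a b : Fin n) :
    lamNum n k {(a, b)}
      = (n - 1) * (n - 1).choose (k - 1) + if b = a then 0 else (n - 2).choose (k - 1) := by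
  have off_diag : ∀ i ∈ univ.erase a,
      (if (i, i) ∈ ({(a, b)} : Finset _) then 0
        else (n - 1 - (lamIdx n {(a, b)} i).card).choose (k - 1)) = (n - 1).choose (k - 1) := by
    intro i hi
    have hia : i ≠ a := ne_of_mem_erase hi
    simp [lamIdx_singleton, hia]
  rw [lamNum, ← add_sum_erase univ _ (mem_univ a), sum_congr rfl off_diag]
  by_cases hba : b = a
  · simp [hba]
  · simp [hba, lamIdx_singleton, Ne.symm hba, Nat.sub_sub, add_comm]

theorem lamNum_le_of_nonempty {K : Finset (Fin n × Fin n)} (hK : K.Nonempty) :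
    lamNum n k K ≤ (n - 1) * (n - 1).choose (k - 1) + (n - 2).choose (k - 1) := by
  obtain ⟨⟨a, b⟩, hab⟩ := hK
  calc lamNum n k K ≤ lamNum n k {(a, b)} := lamNum_anti k (singleton_subset_iff.2 hab)
    _ ≤ _ := by rw [lamNum_singleton]; split_ifs <;> omega

end Numerator

section SecondEigenvalue

variable {n : ℕ}

theorem choose_sub_two_mul_sub_one {k : ℕ} (hn : 2 ≤ n) (hk : 1 ≤ k) :
    (n - 2).choose (k - 1) * (n - 1) = (n - 1).choose (k - 1) * (n - k) := by
  have h := Nat.choose_mul_succ_eq (n - 2) (k - 1)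
  rwa [show n - 2 + 1 = n - 1 by omega, show n - 1 - (k - 1) = n - k by omega] at h

theorem secondEigenvalue_eq_div {k : ℕ} (hn : 2 ≤ n) (hk : 1 ≤ k) (hkn : k ≤ n) :
    secondEigenvalue n k
      = (((n - 1) * (n - 1).choose (k - 1) + (n - 2).choose (k - 1) : ℕ) : ℝ)
          / ((n : ℝ) * (n - 1).choose (k - 1)) := by
  have hC : ((n - 1).choose (k - 1) : ℝ) ≠ 0 := by
    exact_mod_cast (Nat.choose_pos (by omega)).ne'
  have hn1 : (n : ℝ) - 1 ≠ 0 := by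
    have : (2 : ℝ) ≤ n := by exact_mod_cast hn
    linarith
  have hrel := congrArg (Nat.cast : ℕ → ℝ) (choose_sub_two_mul_sub_one hn hk)
  push_cast [Nat.cast_sub (by omega : 1 ≤ n), Nat.cast_sub hkn] at hrel
  rw [secondEigenvalue, eq_div_iff (mul_ne_zero (by positivity) hC)]
  push_cast [Nat.cast_sub (by omega : 1 ≤ n)]
  field_simp
  linear_combination -hrel

theorem secondEigenvalue_one (hn : 2 ≤ n) : secondEigenvalue n 1 = 1 := by
  have hn1 : (n : ℝ) - 1 ≠ 0 := by
    have : (2 : ℝ) ≤ n := by exact_mod_cast hn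
    linarith
  simp only [secondEigenvalue, Nat.cast_one, div_self hn1]
  field_simp
  ring

theorem secondEigenvalue_strictAnti (hn : 2 ≤ n) : StrictAnti (secondEigenvalue n) := by
  intro k k' hkk'
  have hn1 : (0 : ℝ) < n - 1 := by
    have : (2 : ℝ) ≤ n := by exact_mod_cast hn
    linarith
  have : (k : ℝ) < k' := by exact_mod_cast hkk'
  unfold secondEigenvalue
  gcongr

end SecondEigenvalue

section Eigenvalue

variable {n : ℕ} {k : ℕ}

theorem lam_empty (hn : 0 < n) (hkn : k ≤ n) : lam n k ∅ = 1 := by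
  rw [lam_eq_lamNum_div, lamNum_empty, Nat.cast_mul, div_self]
  exact mul_ne_zero (by positivity) (by exact_mod_cast (Nat.choose_pos (by omega)).ne')

theorem lam_singleton_of_ne (hn : 2 ≤ n) (hk : 1 ≤ k) (hkn : k ≤ n) {a b : Fin n} (hab : a ≠ b) :
    lam n k {(a, b)} = secondEigenvalue n k := by
  rw [lam_eq_lamNum_div, lamNum_singleton, if_neg hab.symm,
    secondEigenvalue_eq_div hn hk hkn]

theorem lam_le_secondEigenvalue (hn : 2 ≤ n) (hk : 1 ≤ k) (hkn : k ≤ n)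
    {K : Finset (Fin n × Fin n)} (hK : K.Nonempty) : lam n k K ≤ secondEigenvalue n k := by
  rw [lam_eq_lamNum_div, secondEigenvalue_eq_div hn hk hkn]
  gcongr
  exact lamNum_le_of_nonempty k hK

end Eigenvalue

/-- **Second eigenvalue of the uniform `k`-player dynamic and monotone convergence speed.**
(i) `λ_{k,∅} = 1`; (ii) for every ordered pair `i ≠ j`,
`λ_{k,{(i,j)}} = (1/n)(n − 1 + (n−k)/(n−1))`; (iii) for every nonempty `K`,
`λ_{k,K} ≤ (1/n)(n − 1 + (n−k)/(n−1)) < 1`, so this value is the second-largest eigenvalue;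
(iv) for `2 ≤ k < k' ≤ n` the second eigenvalue is strictly smaller for `k'` than for `k`,
i.e. the `k'`-player dynamic converges strictly faster to the stationary distribution. -/
theorem second_eigenvalue (n k : ℕ) (hk : 2 ≤ k) (hkn : k ≤ n) :
    lam n k (∅ : Finset (Fin n × Fin n)) = 1
      ∧ (∀ i j : Fin n, i ≠ j →
          lam n k {(i, j)} = (1 / (n : ℝ)) * ((n : ℝ) - 1 + ((n : ℝ) - (k : ℝ)) / ((n : ℝ) - 1)))
      ∧ (∀ K : Finset (Fin n × Fin n), K.Nonempty →
          lam n k K ≤ (1 / (n : ℝ)) * ((n : ℝ) - 1 + ((n : ℝ) - (k : ℝ)) / ((n : ℝ) - 1)))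
      ∧ (1 / (n : ℝ)) * ((n : ℝ) - 1 + ((n : ℝ) - (k : ℝ)) / ((n : ℝ) - 1)) < 1
      ∧ (∀ k' : ℕ, k < k' → k' ≤ n →
          (1 / (n : ℝ)) * ((n : ℝ) - 1 + ((n : ℝ) - (k' : ℝ)) / ((n : ℝ) - 1))
            < (1 / (n : ℝ)) * ((n : ℝ) - 1 + ((n : ℝ) - (k : ℝ)) / ((n : ℝ) - 1))) := by
  have hn : 2 ≤ n := hk.trans hkn
  have hk1 : 1 ≤ k := by omega
  refine ⟨lam_empty (by omega) hkn, fun i j hij => lam_singleton_of_ne hn hk1 hkn hij,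
    fun K hK => lam_le_secondEigenvalue hn hk1 hkn hK, ?_,
    fun k' hkk' _ => secondEigenvalue_strictAnti hn hkk'⟩
  calc secondEigenvalue n k < secondEigenvalue n 1 := secondEigenvalue_strictAnti hn hk
    _ = 1 := secondEigenvalue_one hn
end
end

section
/- Logit (softmax) choice probabilities under Gumbel shocks: let n ≥ 1, V_1, …, V_n ∈ ℝ, and let ε_1, …, ε_n be independent identically distributed real random variables with the Gumbel(μ̲, β) distribution, β > 0. Then for each i, the probability that V_i + ε_i ≥ V_j + ε_j for all j equals exp(V_i/β) / Σ_{j=1}^{n} exp(V_j/β). -/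
/-!
Independence makes the joint law of `ε` the product of the Gumbel laws, and splitting off the
`i`-th coordinate gives `P = ∫ f(t) ∏_{j ≠ i} F(t + V_i - V_j) dt`, with `f`, `F` the Gumbel
density and c.d.f. Since `F(t + c) = exp(-e^{-c/β} e^{-(t-μ₀)/β})` and
`f = β⁻¹ e^{-(t-μ₀)/β} F`, the integrand is `β⁻¹ e^{-(t-μ₀)/β} exp(-S e^{-(t-μ₀)/β})` with
`S = Σ_j e^{(V_j - V_i)/β}`: this is `S⁻¹` times the Gumbel density with location
`μ₀ + β log S`, so the integral is `S⁻¹ = e^{V_i/β} / Σ_j e^{V_j/β}`.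
-/
open MeasureTheory ProbabilityTheory

noncomputable section

/-- Density of the Gumbel(μ₀, β) distribution:
`f(x) = (1/β) exp(−z − exp(−z))` where `z = (x − μ₀)/β`. -/
def gumbelPdf (μ₀ β x : ℝ) : ℝ :=
  (1 / β) * Real.exp (-((x - μ₀) / β) - Real.exp (-((x - μ₀) / β)))

/-- The Gumbel(μ₀, β) probability distribution on ℝ, given by the density `gumbelPdf`
with respect to Lebesgue measure (equivalently, with c.d.f.
`F(x) = exp(−exp(−(x − μ₀)/β))`). -/
def gumbelMeasure (μ₀ β : ℝ) : Measure ℝ :=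
  volume.withDensity (fun x => ENNReal.ofReal (gumbelPdf μ₀ β x))

open Set Filter Topology

section FTC

variable {G g : ℝ → ℝ} {m : ℝ}

theorem integrableOn_Iic_deriv_of_nonneg (hderiv : ∀ x, HasDerivAt G (g x) x)
    (hg : ∀ x, 0 ≤ g x) (hbot : Tendsto G atBot (𝓝 m)) (t : ℝ) :
    IntegrableOn g (Iic t) := by
  have hcont : Continuous G := continuous_iff_continuousAt.2 fun x => (hderiv x).continuousAt
  refine integrableOn_Iic_of_intervalIntegral_norm_tendsto (G t - m) t
    (fun x => intervalIntegral.integrableOn_deriv_of_nonneg hcont.continuousOn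
      (fun y _ => hderiv y) (fun y _ => hg y)) tendsto_id ((hbot.const_sub (G t)).congr' ?_)
  filter_upwards [eventually_le_atBot t] with x hx
  rw [intervalIntegral.integral_congr (g := g) fun y _ => Real.norm_of_nonneg (hg y),
    intervalIntegral.integral_eq_sub_of_hasDerivAt (fun y _ => hderiv y)
      (intervalIntegral.intervalIntegrable_deriv_of_nonneg hcont.continuousOn
        (fun y _ => hderiv y) (fun y _ => hg y))]
  rfl

theorem setLIntegral_Iic_ofReal_deriv_of_nonneg (hderiv : ∀ x, HasDerivAt G (g x) x)
    (hg : ∀ x, 0 ≤ g x) (hbot : Tendsto G atBot (𝓝 m)) (t : ℝ) :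
    ∫⁻ x in Iic t, ENNReal.ofReal (g x) = ENNReal.ofReal (G t - m) := by
  have hint := integrableOn_Iic_deriv_of_nonneg hderiv hg hbot t
  rw [← ofReal_integral_eq_lintegral_ofReal hint (ae_of_all _ fun x => hg x),
    integral_Iic_of_hasDerivAt_of_tendsto' (fun x _ => hderiv x) hint hbot]

end FTC

theorem MeasureTheory.Measure.pi_setOf_forall_add_le_add {m : ℕ} (μ : Fin (m + 1) → Measure ℝ)
    [∀ j, SigmaFinite (μ j)] (V : Fin (m + 1) → ℝ) (i : Fin (m + 1)) :
    Measure.pi μ {x | ∀ j, V j + x j ≤ V i + x i}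
      = ∫⁻ t, ∏ k, μ (i.succAbove k) (Iic (V i + t - V (i.succAbove k))) ∂μ i := by
  set E : Set (ℝ × (Fin m → ℝ)) := {p | ∀ k, V (i.succAbove k) + p.2 k ≤ V i + p.1}
  have hE : MeasurableSet E := by
    simp only [E, ofPred_forall]
    exact MeasurableSet.iInter fun k => measurableSet_le (by fun_prop) (by fun_prop)
  have hpre : {x : Fin (m + 1) → ℝ | ∀ j, V j + x j ≤ V i + x i}
      = MeasurableEquiv.piFinSuccAbove (fun _ => ℝ) i ⁻¹' E := by
    ext x
    simp [E, i.forall_iff_succAbove, Fin.removeNth]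
  have hslice : ∀ t, Prod.mk t ⁻¹' E = univ.pi fun k => Iic (V i + t - V (i.succAbove k)) := by
    intro t
    ext y
    simp only [E, mem_preimage, mem_ofPred_eq, mem_univ_pi, mem_Iic, le_sub_iff_add_le']
  rw [hpre, (measurePreserving_piFinSuccAbove μ i).measure_preimage_equiv, Measure.prod_apply hE]
  simp_rw [hslice, Measure.pi_pi]

def gumbelCdf (μ₀ β x : ℝ) : ℝ :=
  Real.exp (-Real.exp (-((x - μ₀) / β)))

section Gumbel

variable {μ₀ β : ℝ}

@[fun_prop]
theorem continuous_gumbelPdf : Continuous (gumbelPdf μ₀ β) := by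
  unfold gumbelPdf; fun_prop

@[fun_prop]
theorem continuous_gumbelCdf : Continuous (gumbelCdf μ₀ β) := by
  unfold gumbelCdf; fun_prop

theorem gumbelPdf_nonneg (hβ : 0 ≤ β) (x : ℝ) : 0 ≤ gumbelPdf μ₀ β x := by
  unfold gumbelPdf; positivity

theorem gumbelCdf_nonneg (x : ℝ) : 0 ≤ gumbelCdf μ₀ β x :=
  (Real.exp_pos _).le

theorem gumbelPdf_eq_mul_gumbelCdf (x : ℝ) :
    gumbelPdf μ₀ β x = 1 / β * Real.exp (-((x - μ₀) / β)) * gumbelCdf μ₀ β x := by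
  rw [gumbelPdf, gumbelCdf, sub_eq_add_neg, Real.exp_add, mul_assoc]

theorem hasDerivAt_gumbelCdf (x : ℝ) : HasDerivAt (gumbelCdf μ₀ β) (gumbelPdf μ₀ β x) x := by
  have hz : HasDerivAt (fun t => -((t - μ₀) / β)) (-(1 / β)) x :=
    (((hasDerivAt_id x).sub_const μ₀).div_const β).neg
  refine hz.exp.neg.exp.congr_deriv ?_
  rw [gumbelPdf_eq_mul_gumbelCdf, gumbelCdf, Pi.neg_apply]
  ring

theorem tendsto_gumbelCdf_atBot (hβ : 0 < β) : Tendsto (gumbelCdf μ₀ β) atBot (𝓝 0) :=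
  Real.tendsto_exp_atBot.comp <| tendsto_neg_atTop_atBot.comp <| Real.tendsto_exp_atTop.comp <|
    tendsto_neg_atBot_atTop.comp <|
      (tendsto_atBot_add_const_right _ (-μ₀) tendsto_id).atBot_div_const hβ

theorem tendsto_gumbelCdf_atTop (hβ : 0 < β) : Tendsto (gumbelCdf μ₀ β) atTop (𝓝 1) := by
  have h := (Real.continuous_exp.tendsto _).comp (Real.tendsto_exp_atBot.comp <|
    tendsto_neg_atTop_atBot.comp <|
      (tendsto_atTop_add_const_right _ (-μ₀) tendsto_id).atTop_div_const hβ).neg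
  rwa [neg_zero, Real.exp_zero] at h

theorem gumbelMeasure_Iic (hβ : 0 < β) (t : ℝ) :
    gumbelMeasure μ₀ β (Iic t) = ENNReal.ofReal (gumbelCdf μ₀ β t) := by
  rw [gumbelMeasure, withDensity_apply _ measurableSet_Iic,
    setLIntegral_Iic_ofReal_deriv_of_nonneg hasDerivAt_gumbelCdf
      (gumbelPdf_nonneg hβ.le) (tendsto_gumbelCdf_atBot hβ), sub_zero]

theorem lintegral_gumbelPdf (hβ : 0 < β) :
    ∫⁻ x, ENNReal.ofReal (gumbelPdf μ₀ β x) = 1 := by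
  have hcdf : Tendsto (fun t => gumbelMeasure μ₀ β (Iic t)) atTop (𝓝 1) := by
    simp_rw [gumbelMeasure_Iic hβ, ← ENNReal.ofReal_one]
    exact (ENNReal.continuous_ofReal.tendsto 1).comp (tendsto_gumbelCdf_atTop hβ)
  have huniv := tendsto_nhds_unique (tendsto_measure_Iic_atTop _) hcdf
  rwa [gumbelMeasure, withDensity_apply _ MeasurableSet.univ, Measure.restrict_univ] at huniv

theorem isProbabilityMeasure_gumbelMeasure (hβ : 0 < β) :
    IsProbabilityMeasure (gumbelMeasure μ₀ β) :=
  ⟨by rw [gumbelMeasure, withDensity_apply _ MeasurableSet.univ, Measure.restrict_univ,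
    lintegral_gumbelPdf hβ]⟩

theorem prod_gumbelCdf_add {ι : Type*} (s : Finset ι) (c : ι → ℝ) (x : ℝ) :
    ∏ j ∈ s, gumbelCdf μ₀ β (x + c j)
      = Real.exp (-((∑ j ∈ s, Real.exp (-c j / β)) * Real.exp (-((x - μ₀) / β)))) := by
  rw [Finset.sum_mul, ← Finset.sum_neg_distrib, Real.exp_sum]
  refine Finset.prod_congr rfl fun j _ => ?_
  rw [gumbelCdf, ← Real.exp_add]
  ring_nf

theorem gumbelPdf_add_mul_log (hβ : β ≠ 0) {S : ℝ} (hS : 0 < S) (x : ℝ) :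
    gumbelPdf (μ₀ + β * Real.log S) β x
      = S * (1 / β * Real.exp (-((x - μ₀) / β))
        * Real.exp (-(S * Real.exp (-((x - μ₀) / β))))) := by
  have hz : -((x - (μ₀ + β * Real.log S)) / β) = Real.log S + -((x - μ₀) / β) := by
    field_simp; ring
  rw [gumbelPdf_eq_mul_gumbelCdf, gumbelCdf, hz, Real.exp_add, Real.exp_log hS]
  ring

theorem gumbelPdf_mul_prod_gumbelCdf_succAbove (hβ : β ≠ 0) {m : ℕ} (V : Fin (m + 1) → ℝ)
    (i : Fin (m + 1)) (x : ℝ) :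
    gumbelPdf μ₀ β x * ∏ k, gumbelCdf μ₀ β (V i + x - V (i.succAbove k))
      = (∑ j, Real.exp ((V j - V i) / β))⁻¹
        * gumbelPdf (μ₀ + β * Real.log (∑ j, Real.exp ((V j - V i) / β))) β x := by
  set S := ∑ j, Real.exp ((V j - V i) / β)
  have hS : 0 < S := Finset.sum_pos (fun j _ => Real.exp_pos _) Finset.univ_nonempty
  calc gumbelPdf μ₀ β x * ∏ k, gumbelCdf μ₀ β (V i + x - V (i.succAbove k))
      = 1 / β * Real.exp (-((x - μ₀) / β)) * ∏ j, gumbelCdf μ₀ β (x + (V i - V j)) := by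
        rw [gumbelPdf_eq_mul_gumbelCdf, Fin.prod_univ_succAbove _ i]
        simp only [sub_self, add_zero, add_sub_assoc', add_comm (V i) x]
        ring
    _ = 1 / β * Real.exp (-((x - μ₀) / β)) * Real.exp (-(S * Real.exp (-((x - μ₀) / β)))) := by
        simp only [prod_gumbelCdf_add, neg_sub, S]
    _ = S⁻¹ * gumbelPdf (μ₀ + β * Real.log S) β x := by
        rw [gumbelPdf_add_mul_log hβ hS, inv_mul_cancel_left₀ hS.ne']

theorem lintegral_prod_gumbelCdf_succAbove (hβ : 0 < β) {m : ℕ} (V : Fin (m + 1) → ℝ)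
    (i : Fin (m + 1)) :
    ∫⁻ x, ∏ k, ENNReal.ofReal (gumbelCdf μ₀ β (V i + x - V (i.succAbove k))) ∂gumbelMeasure μ₀ β
      = ENNReal.ofReal (Real.exp (V i / β) / ∑ j, Real.exp (V j / β)) := by
  have hS : (∑ j, Real.exp ((V j - V i) / β))⁻¹
      = Real.exp (V i / β) / ∑ j, Real.exp (V j / β) := by
    simp only [sub_div, Real.exp_sub, ← Finset.sum_div, inv_div]
  have hpt : ∀ x, ENNReal.ofReal (gumbelPdf μ₀ β x)
        * ∏ k, ENNReal.ofReal (gumbelCdf μ₀ β (V i + x - V (i.succAbove k)))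
      = ENNReal.ofReal (∑ j, Real.exp ((V j - V i) / β))⁻¹
        * ENNReal.ofReal
            (gumbelPdf (μ₀ + β * Real.log (∑ j, Real.exp ((V j - V i) / β))) β x) := by
    intro x
    rw [← ENNReal.ofReal_prod_of_nonneg (fun k _ => gumbelCdf_nonneg _),
      ← ENNReal.ofReal_mul (gumbelPdf_nonneg hβ.le x),
      gumbelPdf_mul_prod_gumbelCdf_succAbove hβ.ne', ENNReal.ofReal_mul (by positivity)]
  rw [gumbelMeasure, lintegral_withDensity_eq_lintegral_mul₀ (by fun_prop) (by fun_prop)]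
  simp only [Pi.mul_apply, hpt]
  rw [lintegral_const_mul' _ _ ENNReal.ofReal_ne_top, lintegral_gumbelPdf hβ, mul_one, hS]

end Gumbel

theorem gumbel_logit_choice_general
    {Ω : Type*} [MeasurableSpace Ω] (P : Measure Ω) [IsProbabilityMeasure P]
    (n : ℕ) (V : Fin n → ℝ) (μ₀ β : ℝ) (hβ : 0 < β)
    (ε : Fin n → Ω → ℝ)
    (hindep : iIndepFun ε P)
    (hdist : ∀ i, Measure.map (ε i) P = gumbelMeasure μ₀ β)
    (i : Fin n) :
    P {ω | ∀ j : Fin n, V j + ε j ω ≤ V i + ε i ω}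
      = ENNReal.ofReal (Real.exp (V i / β) / ∑ j : Fin n, Real.exp (V j / β)) := by
  have := isProbabilityMeasure_gumbelMeasure (μ₀ := μ₀) hβ
  obtain ⟨m, rfl⟩ : ∃ m, n = m + 1 := Nat.exists_eq_add_one_of_ne_zero i.pos.ne'
  have hae : ∀ j, AEMeasurable (ε j) P := fun j =>
    .of_map_ne_zero (by rw [hdist]; exact IsProbabilityMeasure.ne_zero _)
  have hlaw : P.map (fun ω j => ε j ω) = Measure.pi fun _ => gumbelMeasure μ₀ β := by
    rw [(iIndepFun_iff_map_fun_eq_pi_map hae).1 hindep]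
    simp only [hdist]
  have hset : MeasurableSet {x : Fin (m + 1) → ℝ | ∀ j, V j + x j ≤ V i + x i} := by
    simp only [ofPred_forall]
    exact .iInter fun j => measurableSet_le (by fun_prop) (by fun_prop)
  calc P {ω | ∀ j, V j + ε j ω ≤ V i + ε i ω}
      = P.map (fun ω j => ε j ω) {x | ∀ j, V j + x j ≤ V i + x i} :=
        (Measure.map_apply_of_aemeasurable (aemeasurable_pi_lambda _ hae) hset).symm
    _ = _ := by
        simp only [hlaw, Measure.pi_setOf_forall_add_le_add, gumbelMeasure_Iic hβ,
          lintegral_prod_gumbelCdf_succAbove hβ]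

/-- **Logit (softmax) choice probabilities under Gumbel shocks.** Let `V_1, …, V_n ∈ ℝ` and let
`ε_1, …, ε_n` be i.i.d. Gumbel(μ₀, β) random variables, `β > 0`. Then for each `i`, the
probability that `V_i + ε_i ≥ V_j + ε_j` for all `j` equals
`exp(V_i/β) / Σ_j exp(V_j/β)`. -/
theorem gumbel_logit_choice
    {Ω : Type*} [MeasurableSpace Ω] (P : Measure Ω) [IsProbabilityMeasure P]
    (n : ℕ) (hn : 1 ≤ n) (V : Fin n → ℝ) (μ₀ β : ℝ) (hβ : 0 < β)
    (ε : Fin n → Ω → ℝ)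
    (hmeas : ∀ i, Measurable (ε i))
    (hindep : iIndepFun ε P)
    (hdist : ∀ i, Measure.map (ε i) P = gumbelMeasure μ₀ β)
    (i : Fin n) :
    P {ω | ∀ j : Fin n, V j + ε j ω ≤ V i + ε i ω}
      = ENNReal.ofReal (Real.exp (V i / β) / ∑ j : Fin n, Real.exp (V j / β)) :=
  gumbel_logit_choice_general P n V μ₀ β hβ ε hindep hdist i
end
end
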